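/- arXiv:1803.03912 — 6 statements merged into one kernel-verified Lean document; each statement's English description precedes it below -/
import Mathlib

section
/- Let F be a field, n ≥ 1, and K ≥ 2 an integer. Then the number of monomial ideals in M_n(K) satisfies |M_n(K)| ≤ K^n · (K + n − 2)^{(n−1)(K−1)} · (2K − 3)^{K−2}. -/
/-!
For `I` generated by the monomials `X^s`, `s ∈ S`, a polynomial lies in `I` iff its support lies
in the upper closure `U` of `S`. So `I` is spanned over `F` by the monomials `X^a` with `a ∈ U`,
the monomials `X^a` with `a ∉ U` form a basis of `F[X]/I`, and `I ↦ Uᶜ` maps the ideals counted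
injectively to lower sets of `ℕⁿ` with `K` elements. Peeling off maximal elements, such a lower set
is listed as `0 = d₀, d₁, …, d_{K-1}` with `d_{j+1} = d_{p(j)} + e_{i(j)}` and `p(j) ≤ j`, so it is
determined by the code `(p, i) : Fin (K-1) → Fin (K-1) × Fin n`. Hence there are at most
`((K-1) n)^(K-1)` such ideals, and this is below the stated bound.
-/

open MvPolynomial

/-- An ideal of `F[X_1,…,X_n]` is a *monomial ideal* if it is generated by
a set of monomials `X^a = X_1^{a_1} ⋯ X_n^{a_n}`. -/
def IsMonomialIdeal {n : ℕ} {F : Type} [Field F] (I : Ideal (MvPolynomial (Fin n) F)) : Prop :=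
  ∃ S : Set (Fin n →₀ ℕ), I = Ideal.span ((fun a => (monomial a (1 : F))) '' S)

variable {σ R : Type*}

namespace MvPolynomial

variable [CommSemiring R]

theorem restrictScalars_span_monomial_image (S : Set (σ →₀ ℕ)) :
    (Ideal.span ((fun a => monomial a (1 : R)) '' S)).restrictScalars R =
      restrictSupport R (upperClosure S) := by
  ext p
  rw [Submodule.restrictScalars_mem, mem_ideal_span_monomial_image, mem_restrictSupport_iff]
  rfl

theorem isCompl_restrictSupport_compl (s : Set (σ →₀ ℕ)) :
    IsCompl (restrictSupport R s) (restrictSupport R sᶜ) := by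
  constructor
  · rw [Submodule.disjoint_def]
    intro p hs hsc
    rw [mem_restrictSupport_iff] at hs hsc
    rw [← support_eq_empty, ← Finset.coe_eq_empty, ← Set.subset_empty_iff,
      ← Set.inter_compl_self s]
    exact Set.subset_inter hs hsc
  · rw [codisjoint_iff, restrictSupport_eq_span, restrictSupport_eq_span, ← Submodule.span_union,
      ← Set.image_union, Set.union_compl_self, ← restrictSupport_eq_span, restrictSupport_univ]

def standardExponents (I : Ideal (MvPolynomial σ R)) : Set (σ →₀ ℕ) :=
  {a | monomial a 1 ∉ I}

theorem standardExponents_span_monomial_image [Nontrivial R] (S : Set (σ →₀ ℕ)) :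
    standardExponents (Ideal.span ((fun a => monomial a (1 : R)) '' S)) =
      (upperClosure S : Set (σ →₀ ℕ))ᶜ := by
  ext a
  rw [standardExponents, Set.mem_ofPred_eq, ← Submodule.restrictScalars_mem R,
    restrictScalars_span_monomial_image, monomial_mem_restrictSupport]
  simp

theorem finrank_quotient_span_monomial_image {F : Type*} [Field F] (S : Set (σ →₀ ℕ)) :
    Module.finrank F (MvPolynomial σ F ⧸ Ideal.span ((fun a => monomial a (1 : F)) '' S)) =
      (upperClosure S : Set (σ →₀ ℕ))ᶜ.ncard := by
  rw [← Nat.card_coe_set_eq, ← Module.finrank_eq_nat_card_basis (basisRestrictSupport F _),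
    ← (Submodule.quotientEquivOfIsCompl _ _ (isCompl_restrictSupport_compl _)).finrank_eq,
    ← restrictScalars_span_monomial_image]
  exact (Submodule.Quotient.restrictScalarsEquiv F _).finrank_eq.symm

end MvPolynomial

-- The `min` only ensures termination: the codes of lower sets built below have `(c j).1 ≤ j`.
noncomputable def growthSeq (c : ℕ → ℕ × σ) : ℕ → σ →₀ ℕ
  | 0 => 0
  | j + 1 => growthSeq c (min (c j).1 j) + Finsupp.single (c j).2 1
decreasing_by exact Nat.lt_succ_of_le (min_le_right _ _)

theorem growthSeq_zero (c : ℕ → ℕ × σ) : growthSeq c 0 = 0 := by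
  rw [growthSeq]

theorem growthSeq_succ (c : ℕ → ℕ × σ) (j : ℕ) :
    growthSeq c (j + 1) = growthSeq c (min (c j).1 j) + Finsupp.single (c j).2 1 := by
  rw [growthSeq]

theorem growthSeq_congr {c c' : ℕ → ℕ × σ} {j : ℕ} (h : ∀ i < j, c i = c' i) :
    growthSeq c j = growthSeq c' j := by
  induction j using Nat.strong_induction_on with
  | _ j ih =>
    cases j with
    | zero => rw [growthSeq_zero, growthSeq_zero]
    | succ j =>
      have hmin : min (c' j).1 j < j + 1 := Nat.lt_succ_of_le (min_le_right _ _)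
      rw [growthSeq_succ, growthSeq_succ, h j j.lt_succ_self,
        ih _ hmin fun i hi => h i (hi.trans hmin)]

theorem image_growthSeq_update {c : ℕ → ℕ × σ} {m j : ℕ} (hj : j ≤ m) (i : σ) :
    growthSeq (Function.update c m (j, i)) '' Set.Iic (m + 1) =
      insert (growthSeq c j + Finsupp.single i 1) (growthSeq c '' Set.Iic m) := by
  have hbelow : ∀ k ∈ Set.Iic m, growthSeq (Function.update c m (j, i)) k = growthSeq c k :=
    fun k (hk : k ≤ m) => growthSeq_congr fun l hl => Function.update_of_ne (by omega) _ _
  rw [← Order.succ_eq_add_one, Order.Iic_succ, Order.succ_eq_add_one, Set.image_insert_eq,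
    growthSeq_succ, Function.update_self, min_eq_left hj, hbelow j hj, Set.image_congr hbelow]

theorem Finsupp.exists_add_single_one_eq {x : σ →₀ ℕ} (hx : x ≠ 0) :
    ∃ p i, p + Finsupp.single i 1 = x := by
  obtain ⟨i, hi⟩ := Finsupp.ne_iff.mp hx
  exact ⟨x - Finsupp.single i 1, i, tsub_add_cancel_of_le (Finsupp.single_le_iff.mpr
    (Nat.one_le_iff_ne_zero.mpr hi))⟩

theorem IsLowerSet.diff_singleton_of_maximal {α : Type*} [PartialOrder α] {s : Set α} {x : α}
    (hs : IsLowerSet s) (hx : Maximal (· ∈ s) x) : IsLowerSet (s \ {x}) := by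
  rintro b a hab ⟨hb, hbx⟩
  refine ⟨hs hab hb, fun hax => hbx ?_⟩
  rw [Set.mem_singleton_iff] at hax ⊢
  subst hax
  exact (hx.2 hb hab).antisymm hab

theorem IsLowerSet.exists_growthSeq [Nonempty σ] {m : ℕ} {s : Set (σ →₀ ℕ)}
    (hs : IsLowerSet s) (hcard : s.ncard = m + 1) :
    ∃ c : ℕ → ℕ × σ, (∀ j, (c j).1 ≤ j) ∧ growthSeq c '' Set.Iic m = s := by
  induction m generalizing s with
  | zero =>
    obtain ⟨a, rfl⟩ := Set.ncard_eq_one.mp hcard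
    have h0 : (0 : σ →₀ ℕ) = a := hs zero_le rfl
    refine ⟨fun _ => (0, Classical.arbitrary σ), fun _ => zero_le, ?_⟩
    subst h0
    rw [show Set.Iic 0 = {0} from Set.Iic_bot, Set.image_singleton, growthSeq_zero]
  | succ m ih =>
    obtain ⟨x, hx⟩ := (Set.finite_of_ncard_pos (by omega : 0 < s.ncard)).exists_maximal
      (Set.nonempty_of_ncard_ne_zero (by omega))
    have hx0 : x ≠ 0 := by
      rintro rfl
      have hs0 : s ⊆ {0} := fun y hy => (hx.2 hy zero_le).antisymm zero_le
      have := (Set.ncard_le_ncard hs0).trans_eq (Set.ncard_singleton 0)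
      omega
    obtain ⟨p, i, rfl⟩ := Finsupp.exists_add_single_one_eq hx0
    obtain ⟨c, hc, hcs⟩ := ih (hs.diff_singleton_of_maximal hx)
      (by rw [Set.ncard_sdiff_singleton_of_mem hx.1, hcard]; rfl)
    have hp : p ∈ s \ {p + Finsupp.single i 1} :=
      ⟨hs le_self_add hx.1, by simp⟩
    rw [← hcs] at hp
    obtain ⟨j, hj, rfl⟩ := hp
    refine ⟨Function.update c m (j, i), fun k => ?_, ?_⟩
    · rcases eq_or_ne k m with rfl | hk
      · simpa using hj
      · rw [Function.update_of_ne hk]; exact hc k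
    · rw [image_growthSeq_update hj, hcs, Set.insert_sdiff_singleton, Set.insert_eq_of_mem hx.1]

theorem ncard_le_of_forall_isLowerSet [Fintype σ] [Nonempty σ] (m : ℕ)
    {𝒮 : Set (Set (σ →₀ ℕ))} (h𝒮 : ∀ s ∈ 𝒮, IsLowerSet s ∧ s.ncard = m + 1) :
    𝒮.ncard ≤ (m * Fintype.card σ) ^ m := by
  choose c hc using fun s : 𝒮 => (h𝒮 s s.2).1.exists_growthSeq (h𝒮 s s.2).2
  let code : 𝒮 → Fin m → Fin m × σ := fun s j =>
    (⟨(c s j).1, ((hc s).1 j).trans_lt j.2⟩, (c s j).2)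
  have hcode : Function.Injective code := by
    intro s t hst
    have hct : ∀ j < m, c s j = c t j := fun j hj => by
      simpa [code, Prod.ext_iff, Fin.ext_iff] using congrFun hst ⟨j, hj⟩
    apply Subtype.ext
    rw [← (hc s).2, ← (hc t).2]
    exact Set.image_congr fun j (hj : j ≤ m) => growthSeq_congr fun i hi => hct i (by omega)
  calc 𝒮.ncard = Nat.card 𝒮 := (Nat.card_coe_set_eq _).symm
    _ ≤ Nat.card (Fin m → Fin m × σ) := Nat.card_le_card_of_injective _ hcode
    _ = (m * Fintype.card σ) ^ m := by simp [Nat.card_eq_fintype_card]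

theorem sub_one_mul_pow_sub_one_le {n K : ℕ} (hn : n ≠ 0) (hK : 2 ≤ K) :
    ((K - 1) * n) ^ (K - 1) ≤
      K ^ n * (K + n - 2) ^ ((n - 1) * (K - 1)) * (2 * K - 3) ^ (K - 2) := by
  have h1 : (K - 1) ^ (K - 1) ≤ K * (2 * K - 3) ^ (K - 2) := by
    obtain ⟨k, rfl⟩ : ∃ k, K = k + 2 := ⟨K - 2, by omega⟩
    calc (k + 2 - 1) ^ (k + 2 - 1) = (k + 1) ^ k * (k + 1) := by simp [pow_succ]
      _ ≤ (2 * (k + 2) - 3) ^ k * (k + 2) :=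
        Nat.mul_le_mul (Nat.pow_le_pow_left (by omega) _) (by omega)
      _ = (k + 2) * (2 * (k + 2) - 3) ^ (k + 2 - 2) := by simp [mul_comm]
  have h2 : n ^ (K - 1) ≤ (K + n - 2) ^ ((n - 1) * (K - 1)) := by
    rcases eq_or_ne n 1 with rfl | hn1
    · simp
    · calc n ^ (K - 1) ≤ (K + n - 2) ^ (K - 1) := Nat.pow_le_pow_left (by omega) _
        _ ≤ (K + n - 2) ^ ((n - 1) * (K - 1)) :=
          Nat.pow_le_pow_right (by omega) (Nat.le_mul_of_pos_left _ (by omega))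
  calc ((K - 1) * n) ^ (K - 1) = (K - 1) ^ (K - 1) * n ^ (K - 1) := mul_pow _ _ _
    _ ≤ K * (2 * K - 3) ^ (K - 2) * (K + n - 2) ^ ((n - 1) * (K - 1)) := Nat.mul_le_mul h1 h2
    _ = K * (K + n - 2) ^ ((n - 1) * (K - 1)) * (2 * K - 3) ^ (K - 2) := mul_right_comm _ _ _
    _ ≤ K ^ n * (K + n - 2) ^ ((n - 1) * (K - 1)) * (2 * K - 3) ^ (K - 2) := by
      gcongr
      exact Nat.le_self_pow hn K

/-- For `K ≥ 2`, the number of monomial ideals `I` with `dim F[X]/I = K` is at most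
`K^n (K+n-2)^{(n-1)(K-1)} (2K-3)^{K-2}`. -/
theorem statement_1 (F : Type) [Field F] (n K : ℕ) (hn : 1 ≤ n) (hK : 2 ≤ K) :
    {I : Ideal (MvPolynomial (Fin n) F) | IsMonomialIdeal I ∧
        Module.finrank F (MvPolynomial (Fin n) F ⧸ I) = K}.ncard
      ≤ K ^ n * (K + n - 2) ^ ((n - 1) * (K - 1)) * (2 * K - 3) ^ (K - 2) := by
  have : Nonempty (Fin n) := ⟨⟨0, hn⟩⟩
  set M := {I : Ideal (MvPolynomial (Fin n) F) | IsMonomialIdeal I ∧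
    Module.finrank F (MvPolynomial (Fin n) F ⧸ I) = K}
  have hinj : Set.InjOn standardExponents M := by
    rintro _ ⟨⟨S, rfl⟩, -⟩ _ ⟨⟨T, rfl⟩, -⟩ h
    rw [standardExponents_span_monomial_image, standardExponents_span_monomial_image,
      compl_inj_iff, SetLike.coe_set_eq] at h
    refine Submodule.restrictScalars_injective F _ _ ?_
    rw [restrictScalars_span_monomial_image, restrictScalars_span_monomial_image, h]
  have hlower : ∀ s ∈ standardExponents '' M, IsLowerSet s ∧ s.ncard = K - 1 + 1 := by
    rintro _ ⟨_, ⟨⟨S, rfl⟩, hdim⟩, rfl⟩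
    rw [standardExponents_span_monomial_image,
      ← finrank_quotient_span_monomial_image (F := F), hdim]
    exact ⟨(upperClosure S).upper.compl, by omega⟩
  calc M.ncard = (standardExponents '' M).ncard := hinj.ncard_image.symm
    _ ≤ ((K - 1) * Fintype.card (Fin n)) ^ (K - 1) := ncard_le_of_forall_isLowerSet (K - 1) hlower
    _ ≤ K ^ n * (K + n - 2) ^ ((n - 1) * (K - 1)) * (2 * K - 3) ^ (K - 2) := by
      rw [Fintype.card_fin]
      exact sub_one_mul_pow_sub_one_le (by omega) hK
end

section
/- Let F be a field and n ≥ 1. For any real number R > 1 there exists a constant c (depending only on n and R) such that for every integer K ≥ 1, the number of monomial ideals in M_n(K) satisfies |M_n(K)| ≤ c · R^{K^{3/2}}. -/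
open MvPolynomial

/-!
A monomial ideal `I` is determined by its standard monomials, the monomials not in `I`; their
images form a basis of `F[X]/I`, so there are exactly `K` of them. They form a lower set, so each
exponent of a standard monomial is `< K`, and the standard monomials are a `K`-subset of the box
`[0, K)ⁿ`. Hence there are at most `binom(Kⁿ, K) ≤ K^{nK}` such ideals, and
`K^{nK} = exp(n K log K)` is eventually below `R^{K^{3/2}} = exp(K^{3/2} log R)` since
`log K = o(√K)`.
-/

open Filter Asymptotics

section StandardMonomials

variable {σ R : Type*}

def standardMonomials [CommSemiring R] (I : Ideal (MvPolynomial σ R)) : Set (σ →₀ ℕ) :=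
  {a | monomial a 1 ∉ I}

theorem monomial_one_mem_of_le [CommSemiring R] {I : Ideal (MvPolynomial σ R)} {a b : σ →₀ ℕ}
    (hab : a ≤ b) (ha : monomial a 1 ∈ I) : monomial b 1 ∈ I := by
  have : monomial (b - a) (1 : R) * monomial a 1 = monomial b 1 := by
    rw [monomial_mul, one_mul, tsub_add_cancel_of_le hab]
  exact this ▸ I.mul_mem_left _ ha

theorem isLowerSet_standardMonomials [CommSemiring R] (I : Ideal (MvPolynomial σ R)) :
    IsLowerSet (standardMonomials I) :=
  fun _ _ hba hb ha => hb (monomial_one_mem_of_le hba ha)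

theorem IsLowerSet.apply_lt_ncard {s : Set (σ →₀ ℕ)} (hs : IsLowerSet s) (hfin : s.Finite)
    {a : σ →₀ ℕ} (ha : a ∈ s) (i : σ) : a i < s.ncard := by
  let axis := (Finset.range (a i + 1)).map ⟨Finsupp.single i, Finsupp.single_injective i⟩
  have haxis : (axis : Set (σ →₀ ℕ)) ⊆ s := by
    intro b hb
    obtain ⟨k, hk, rfl⟩ := Finset.mem_map.1 hb
    exact hs (Finsupp.single_le_iff.2 (Nat.lt_succ_iff.1 (Finset.mem_range.1 hk))) ha
  have := Set.ncard_le_ncard haxis hfin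
  rw [Set.ncard_coe_finset, Finset.card_map, Finset.card_range] at this
  omega

theorem span_mk_monomial_standardMonomials [CommRing R] (I : Ideal (MvPolynomial σ R)) :
    ⊤ ≤ Submodule.span R
      (Set.range fun a : standardMonomials I => Ideal.Quotient.mkₐ R I (monomial a.1 1)) := by
  have hmap : Submodule.map (Ideal.Quotient.mkₐ R I).toLinearMap ⊤ = ⊤ := by
    rw [Submodule.map_top, LinearMap.range_eq_top]
    exact Ideal.Quotient.mkₐ_surjective R I
  rw [← hmap, ← (basisMonomials σ R).span_eq, Submodule.map_span, Submodule.span_le]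
  rintro _ ⟨_, ⟨a, rfl⟩, rfl⟩
  by_cases ha : monomial a 1 ∈ I
  · simp [coe_basisMonomials, Ideal.Quotient.eq_zero_iff_mem.2 ha]
  · exact Submodule.subset_span ⟨⟨a, ha⟩, rfl⟩

end StandardMonomials

section Box

variable {σ : Type*} [Fintype σ] [DecidableEq σ]

variable (σ) in
noncomputable def exponentBox (K : ℕ) : Finset (σ →₀ ℕ) :=
  (Fintype.piFinset fun _ : σ => Finset.range K).map Finsupp.equivFunOnFinite.symm.toEmbedding

theorem mem_exponentBox {K : ℕ} {a : σ →₀ ℕ} : a ∈ exponentBox σ K ↔ ∀ i, a i < K := by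
  simp [exponentBox, Finset.mem_map_equiv]

theorem card_exponentBox (K : ℕ) : (exponentBox σ K).card = K ^ Fintype.card σ := by
  simp [exponentBox]

end Box

section MonomialIdeal

variable {F : Type} [Field F] {n : ℕ} {I J : Ideal (MvPolynomial (Fin n) F)}

theorem IsMonomialIdeal.monomial_one_mem_of_mem_support (hI : IsMonomialIdeal I)
    {p : MvPolynomial (Fin n) F} (hp : p ∈ I) {a : Fin n →₀ ℕ} (ha : a ∈ p.support) :
    monomial a 1 ∈ I := by
  obtain ⟨S, rfl⟩ := hI
  obtain ⟨b, hbS, hba⟩ := (mem_ideal_span_monomial_image.1 hp) a ha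
  exact monomial_one_mem_of_le hba (Ideal.subset_span ⟨b, hbS, rfl⟩)

theorem IsMonomialIdeal.le_of_monomial_one_mem (hI : IsMonomialIdeal I)
    (h : ∀ a, monomial a 1 ∈ I → monomial a 1 ∈ J) : I ≤ J := by
  intro p hp
  rw [p.as_sum]
  refine J.sum_mem fun a ha => ?_
  rw [← mul_one (coeff a p), ← C_mul_monomial]
  exact J.mul_mem_left _ (h a (hI.monomial_one_mem_of_mem_support hp ha))

theorem IsMonomialIdeal.eq_of_standardMonomials_eq (hI : IsMonomialIdeal I)
    (hJ : IsMonomialIdeal J) (h : standardMonomials I = standardMonomials J) : I = J := by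
  have hmem a : monomial a 1 ∈ I ↔ monomial a (1 : F) ∈ J := not_iff_not.1 (Set.ext_iff.1 h a)
  exact le_antisymm (hI.le_of_monomial_one_mem fun a => (hmem a).1)
    (hJ.le_of_monomial_one_mem fun a => (hmem a).2)

theorem IsMonomialIdeal.linearIndependent_mk_monomial (hI : IsMonomialIdeal I) :
    LinearIndependent F fun a : standardMonomials I => Ideal.Quotient.mkₐ F I (monomial a.1 1) := by
  rw [linearIndependent_iff']
  intro s g hsum i hi
  set p := ∑ a ∈ s, g a • monomial a.1 (1 : F)
  have hp : p ∈ I := by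
    rw [← Ideal.Quotient.eq_zero_iff_mem, ← Ideal.Quotient.mkₐ_eq_mk F, map_sum]
    simpa using hsum
  have hcoeff : coeff i.1 p = g i := by
    simp only [p, coeff_sum, coeff_smul, coeff_monomial, Subtype.val_inj, smul_eq_mul,
      mul_ite, mul_one, mul_zero, Finset.sum_ite_eq', if_pos hi]
  by_contra hgi
  exact i.2 (hI.monomial_one_mem_of_mem_support hp (mem_support_iff.2 (hcoeff ▸ hgi)))

noncomputable def IsMonomialIdeal.standardBasis (hI : IsMonomialIdeal I) :
    Module.Basis (standardMonomials I) F (MvPolynomial (Fin n) F ⧸ I) :=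
  .mk hI.linearIndependent_mk_monomial (span_mk_monomial_standardMonomials I)

theorem IsMonomialIdeal.ncard_standardMonomials (hI : IsMonomialIdeal I) :
    (standardMonomials I).ncard = Module.finrank F (MvPolynomial (Fin n) F ⧸ I) :=
  (Module.finrank_eq_nat_card_basis hI.standardBasis).symm

theorem IsMonomialIdeal.standardMonomials_subset_exponentBox (hI : IsMonomialIdeal I)
    {K : ℕ} (hK : 1 ≤ K) (hIK : Module.finrank F (MvPolynomial (Fin n) F ⧸ I) = K) :
    standardMonomials I ⊆ exponentBox (Fin n) K := by
  have hcard : (standardMonomials I).ncard = K := hI.ncard_standardMonomials.trans hIK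
  have hfin : (standardMonomials I).Finite := Set.finite_of_ncard_pos (by omega)
  intro a ha
  exact mem_exponentBox.2 fun i => hcard ▸ (isLowerSet_standardMonomials I).apply_lt_ncard hfin ha i

theorem ncard_monomialIdeal_finrank_eq_le_choose {K : ℕ} (hK : 1 ≤ K) :
    {I : Ideal (MvPolynomial (Fin n) F) | IsMonomialIdeal I ∧
        Module.finrank F (MvPolynomial (Fin n) F ⧸ I) = K}.ncard ≤ (K ^ n).choose K := by
  classical
  let box := exponentBox (Fin n) K
  let restrict (I : Ideal (MvPolynomial (Fin n) F)) := box.filter (· ∈ standardMonomials I)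
  have hrestrict : ∀ I ∈ {I : Ideal (MvPolynomial (Fin n) F) | IsMonomialIdeal I ∧
      Module.finrank F (MvPolynomial (Fin n) F ⧸ I) = K},
      (restrict I : Set (Fin n →₀ ℕ)) = standardMonomials I := by
    rintro I ⟨hI, hIK⟩
    rw [Finset.coe_filter]
    exact Set.inter_eq_right.2 (hI.standardMonomials_subset_exponentBox hK hIK)
  have hmaps : ∀ I ∈ {I : Ideal (MvPolynomial (Fin n) F) | IsMonomialIdeal I ∧
      Module.finrank F (MvPolynomial (Fin n) F ⧸ I) = K}, restrict I ∈ box.powersetCard K := by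
    intro I hI
    refine Finset.mem_powersetCard.2 ⟨Finset.filter_subset _ _, ?_⟩
    rw [← Set.ncard_coe_finset, hrestrict I hI, hI.1.ncard_standardMonomials, hI.2]
  have hinj : Set.InjOn restrict {I : Ideal (MvPolynomial (Fin n) F) | IsMonomialIdeal I ∧
      Module.finrank F (MvPolynomial (Fin n) F ⧸ I) = K} := by
    intro I hI J hJ hIJ
    refine hI.1.eq_of_standardMonomials_eq hJ.1 ?_
    rw [← hrestrict I hI, ← hrestrict J hJ, hIJ]
  calc _ ≤ (box.powersetCard K : Set (Finset (Fin n →₀ ℕ))).ncard :=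
        Set.ncard_le_ncard_of_injOn restrict hmaps hinj (Finset.finite_toSet _)
    _ = (K ^ n).choose K := by
      rw [Set.ncard_coe_finset, Finset.card_powersetCard, card_exponentBox, Fintype.card_fin]

end MonomialIdeal

theorem eventually_pow_mul_self_le_rpow (n : ℕ) {R : ℝ} (hR : 1 < R) :
    ∀ᶠ K : ℕ in atTop, (K : ℝ) ^ (n * K) ≤ R ^ ((K : ℝ) ^ ((3 : ℝ) / 2)) := by
  have hlogR : 0 < Real.log R := Real.log_pos hR
  have hlog : ∀ᶠ x : ℝ in atTop, ‖n * Real.log x‖ ≤ Real.log R * ‖x ^ ((1 : ℝ) / 2)‖ :=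
    ((isLittleO_log_rpow_atTop (by norm_num)).const_mul_left (n : ℝ)).def hlogR
  filter_upwards [tendsto_natCast_atTop_atTop.eventually hlog, eventually_ge_atTop 1]
    with K hK hK1
  have hKpos : (0 : ℝ) < K := by exact_mod_cast hK1
  have hsqrt : (0 : ℝ) ≤ (K : ℝ) ^ ((1 : ℝ) / 2) := by positivity
  rw [Real.norm_of_nonneg hsqrt] at hK
  have hpow : (K : ℝ) ^ ((3 : ℝ) / 2) = K * (K : ℝ) ^ ((1 : ℝ) / 2) := by
    rw [show (3 : ℝ) / 2 = 1 + 1 / 2 by norm_num, Real.rpow_add hKpos, Real.rpow_one]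
  rw [← Real.rpow_natCast, Real.rpow_def_of_pos hKpos, Real.rpow_def_of_pos (by linarith),
    Real.exp_le_exp, hpow]
  push_cast
  nlinarith [Real.le_norm_self ((n : ℝ) * Real.log K)]

theorem statement_2_general (F : Type) [Field F] (n : ℕ) (R : ℝ) (hR : 1 < R) :
    ∃ c : ℝ, ∀ K : ℕ, 1 ≤ K →
      ({I : Ideal (MvPolynomial (Fin n) F) | IsMonomialIdeal I ∧
          Module.finrank F (MvPolynomial (Fin n) F ⧸ I) = K}.ncard : ℝ)
        ≤ c * R ^ ((K : ℝ) ^ ((3 : ℝ) / 2)) := by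
  have hRpos : 0 < R := by linarith
  have hbigO : (fun K : ℕ => (K : ℝ) ^ (n * K)) =O[cofinite]
      fun K : ℕ => R ^ ((K : ℝ) ^ ((3 : ℝ) / 2)) := by
    rw [Nat.cofinite_eq_atTop]
    refine IsBigO.of_bound 1 ((eventually_pow_mul_self_le_rpow n hR).mono fun K hK => ?_)
    rwa [one_mul, Real.norm_of_nonneg (by positivity), Real.norm_of_nonneg (by positivity)]
  obtain ⟨c, -, hc⟩ := bound_of_isBigO_cofinite hbigO
  refine ⟨c, fun K hK => ?_⟩
  have hRK : 0 < R ^ ((K : ℝ) ^ ((3 : ℝ) / 2)) := by positivity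
  calc _ ≤ ((K ^ n).choose K : ℝ) := by
        exact_mod_cast ncard_monomialIdeal_finrank_eq_le_choose (F := F) hK
    _ ≤ (K : ℝ) ^ (n * K) := by
        rw [pow_mul]
        exact_mod_cast Nat.choose_le_pow _ _
    _ ≤ c * R ^ ((K : ℝ) ^ ((3 : ℝ) / 2)) := by
        simpa [Real.norm_of_nonneg hRK.le] using hc hRK.ne'

/-- For any real `R > 1` there is a constant `c` (depending on `n` and `R`) such that
for all `K ≥ 1` the number of monomial ideals with `dim F[X]/I = K` is at most
`c · R^{K^{3/2}}`. -/
theorem statement_2 (F : Type) [Field F] (n : ℕ) (hn : 1 ≤ n) (R : ℝ) (hR : 1 < R) :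
    ∃ c : ℝ, ∀ K : ℕ, 1 ≤ K →
      ({I : Ideal (MvPolynomial (Fin n) F) | IsMonomialIdeal I ∧
          Module.finrank F (MvPolynomial (Fin n) F ⧸ I) = K}.ncard : ℝ)
        ≤ c * R ^ ((K : ℝ) ^ ((3 : ℝ) / 2)) :=
  statement_2_general F n R hR
end

section
/- Let F be a field and n ≥ 1. There exists a constant c_n, depending only on n, such that for every integer K ≥ 2, the number of monomial ideals in M_n(K) satisfies |M_n(K)| ≤ c_n^K · K^{nK + n}. -/
open MvPolynomial

section Aux

variable {F : Type} [Field F] {n : ℕ}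

/-- The set of standard monomials of an ideal. -/
def stdSet (I : Ideal (MvPolynomial (Fin n) F)) : Set (Fin n →₀ ℕ) :=
  {a | monomial a (1 : F) ∉ I}

lemma monomial_mem_span {S : Set (Fin n →₀ ℕ)} (a : Fin n →₀ ℕ) :
    monomial a (1 : F) ∈ Ideal.span ((fun b => (monomial b (1 : F))) '' S) ↔
      ∃ s ∈ S, s ≤ a := by
  rw [mem_ideal_span_monomial_image]
  simp [support_monomial]

lemma stdSet_lower {I : Ideal (MvPolynomial (Fin n) F)} (hI : IsMonomialIdeal I)
    {a b : Fin n →₀ ℕ} (hb : b ≤ a) (ha : a ∈ stdSet I) : b ∈ stdSet I := by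
  obtain ⟨S, rfl⟩ := hI
  intro hmem
  apply ha
  rw [monomial_mem_span] at hmem ⊢
  obtain ⟨s, hs, hsb⟩ := hmem
  exact ⟨s, hs, hsb.trans hb⟩

/-- A monomial ideal is determined by its set of standard monomials. -/
lemma span_stdSet_compl {I : Ideal (MvPolynomial (Fin n) F)} (hI : IsMonomialIdeal I) :
    I = Ideal.span ((fun a => (monomial a (1 : F))) '' (stdSet I)ᶜ) := by
  obtain ⟨S, hS⟩ := hI
  apply le_antisymm
  · intro p hp
    rw [mem_ideal_span_monomial_image]
    intro a ha
    rw [hS, mem_ideal_span_monomial_image] at hp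
    obtain ⟨s, hs, hsa⟩ := hp a ha
    refine ⟨a, ?_, le_rfl⟩
    simp only [Set.mem_compl_iff, stdSet, Set.mem_setOf_eq, not_not, hS]
    rw [monomial_mem_span]
    exact ⟨s, hs, hsa⟩
  · rw [Ideal.span_le]
    rintro p ⟨a, ha, rfl⟩
    simpa [stdSet] using ha

lemma stdSet_linearIndependent {I : Ideal (MvPolynomial (Fin n) F)} (hI : IsMonomialIdeal I) :
    LinearIndependent F
      (fun a : stdSet I => Ideal.Quotient.mkₐ F I (monomial (a : Fin n →₀ ℕ) (1 : F))) := by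
  obtain ⟨S, rfl⟩ := hI
  rw [linearIndependent_iff']
  intro t g hg a₀ ha₀
  by_contra hga
  have hq0 : Ideal.Quotient.mkₐ F (Ideal.span ((fun b => (monomial b (1 : F))) '' S))
      (∑ a ∈ t, monomial (a : Fin n →₀ ℕ) (g a)) = 0 := by
    rw [← hg, map_sum]
    refine Finset.sum_congr rfl fun a _ => ?_
    rw [← map_smul, smul_monomial, smul_eq_mul, mul_one]
  rw [Ideal.Quotient.mkₐ_eq_mk, Ideal.Quotient.eq_zero_iff_mem] at hq0
  have hq := hq0
  have hcoeff : coeff (a₀ : Fin n →₀ ℕ) (∑ a ∈ t, monomial (a : Fin n →₀ ℕ) (g a)) = g a₀ := by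
    rw [coeff_sum]
    have : ∀ a ∈ t, coeff (a₀ : Fin n →₀ ℕ) (monomial (a : Fin n →₀ ℕ) (g a)) =
        if a = a₀ then g a else 0 := by
      intro a _
      rw [coeff_monomial]
      simp [Subtype.ext_iff]
    rw [Finset.sum_congr rfl this, Finset.sum_ite_eq' t a₀ g, if_pos ha₀]
  have hsupp : (a₀ : Fin n →₀ ℕ) ∈ (∑ a ∈ t, monomial (a : Fin n →₀ ℕ) (g a)).support := by
    rw [mem_support_iff, hcoeff]; exact hga
  rw [mem_ideal_span_monomial_image] at hq
  obtain ⟨s, hs, hsa⟩ := hq _ hsupp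
  apply a₀.2
  rw [monomial_mem_span]
  exact ⟨s, hs, hsa⟩

end Aux

/-- There is a constant `c_n` depending only on `n` such that for all `K ≥ 2` the number of
monomial ideals with `dim F[X]/I = K` is at most `c_n^K · K^{nK+n}`. -/
theorem statement_3 (F : Type) [Field F] (n : ℕ) (hn : 1 ≤ n) :
    ∃ c : ℝ, ∀ K : ℕ, 2 ≤ K →
      ({I : Ideal (MvPolynomial (Fin n) F) | IsMonomialIdeal I ∧
          Module.finrank F (MvPolynomial (Fin n) F ⧸ I) = K}.ncard : ℝ)
        ≤ c ^ K * (K : ℝ) ^ (n * K + n) := by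
  classical
  use 2
  intro K hK
  set A : Set (Ideal (MvPolynomial (Fin n) F)) :=
    {I : Ideal (MvPolynomial (Fin n) F) | IsMonomialIdeal I ∧
      Module.finrank F (MvPolynomial (Fin n) F ⧸ I) = K} with hA
  -- basic facts about elements of A
  have hfin : ∀ I ∈ A, (stdSet I).Finite ∧ (stdSet I).ncard ≤ K := by
    intro I hI
    have hFD : FiniteDimensional F (MvPolynomial (Fin n) F ⧸ I) :=
      FiniteDimensional.of_finrank_pos (by rw [hI.2]; omega)
    have hli := stdSet_linearIndependent hI.1
    have hfinite : Finite (stdSet I) := hli.finite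
    haveI : Fintype (stdSet I) := Fintype.ofFinite _
    have hcard := hli.fintype_card_le_finrank
    rw [hI.2] at hcard
    refine ⟨Set.finite_coe_iff.mp hfinite, ?_⟩
    rwa [← Nat.card_coe_set_eq, Nat.card_eq_fintype_card]
  -- each standard exponent is < K in every coordinate
  have hbox : ∀ I ∈ A, ∀ a ∈ stdSet I, ∀ i, a i < K := by
    intro I hI a ha i
    by_contra hKa
    push_neg at hKa
    have hsub : (fun j : Fin (K + 1) => a.update i (j : ℕ)) '' Set.univ ⊆ stdSet I := by
      rintro _ ⟨j, -, rfl⟩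
      refine stdSet_lower hI.1 ?_ ha
      intro k
      have hjlt : (j : ℕ) < K + 1 := j.isLt
      rcases eq_or_ne k i with rfl | hk
      · simp only [Finsupp.coe_update, Function.update_self]
        omega
      · simp [Finsupp.coe_update, Function.update_of_ne hk]
    have hinj : Function.Injective (fun j : Fin (K + 1) => a.update i (j : ℕ)) := by
      intro j₁ j₂ h
      have := congrArg (fun f : Fin n →₀ ℕ => f i) h
      simp only [Finsupp.coe_update, Function.update_self] at this
      exact Fin.ext this
    have h1 : ((fun j : Fin (K + 1) => a.update i (j : ℕ)) '' Set.univ).ncard = K + 1 := by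
      rw [Set.ncard_image_of_injective _ hinj, Set.ncard_univ, Nat.card_eq_fintype_card,
        Fintype.card_fin]
    have h2 := Set.ncard_le_ncard hsub (hfin I hI).1
    rw [h1] at h2
    have := (hfin I hI).2
    omega
  -- the encoding map
  set g : (Fin n →₀ ℕ) → (Fin n → Fin K) :=
    fun a i => ⟨min (a i) (K - 1), lt_of_le_of_lt (min_le_right _ _) (by omega)⟩ with hg
  set f : Ideal (MvPolynomial (Fin n) F) → Finset (Fin n → Fin K) :=
    fun I => (Set.toFinite (g '' stdSet I)).toFinset with hf
  have hfval : ∀ I, (f I : Set (Fin n → Fin K)) = g '' stdSet I := by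
    intro I; simp only [hf, Set.Finite.coe_toFinset]
  -- injectivity on A
  have hstd : ∀ I ∈ A, ∀ J ∈ A, stdSet I = stdSet J → I = J := by
    intro I hI J hJ h
    rw [span_stdSet_compl hI.1, span_stdSet_compl hJ.1, h]
  have hinjA : Set.InjOn f A := by
    intro I hI J hJ hIJ
    apply hstd I hI J hJ
    have himg : g '' stdSet I = g '' stdSet J := by
      rw [← hfval, ← hfval, hIJ]
    have key : ∀ (P Q : Ideal (MvPolynomial (Fin n) F)), P ∈ A → Q ∈ A →
        g '' stdSet P = g '' stdSet Q → stdSet P ⊆ stdSet Q := by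
      intro P Q hP hQ hPQ a ha
      have : g a ∈ g '' stdSet Q := by rw [← hPQ]; exact ⟨a, ha, rfl⟩
      obtain ⟨b, hb, hba⟩ := this
      have hab : b = a := by
        ext i
        have := congrArg (fun v : Fin n → Fin K => (v i : ℕ)) hba
        simp only [hg] at this
        have h1 := hbox P hP a ha i
        have h2 := hbox Q hQ b hb i
        omega
      rwa [← hab]
    exact Set.Subset.antisymm (key I J hI hJ himg) (key J I hJ hI himg.symm)
  -- f maps A into finsets of cardinality ≤ K
  set B : Finset (Finset (Fin n → Fin K)) :=
    Finset.univ.filter (fun s => s.card ≤ K) with hB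
  have hfB : ∀ I ∈ A, f I ∈ B := by
    intro I hI
    rw [hB, Finset.mem_filter]
    refine ⟨Finset.mem_univ _, ?_⟩
    have : ((f I : Set (Fin n → Fin K))).ncard ≤ K := by
      rw [hfval]
      calc (g '' stdSet I).ncard ≤ (stdSet I).ncard :=
            Set.ncard_image_le (hfin I hI).1
        _ ≤ K := (hfin I hI).2
    rwa [Set.ncard_coe_finset] at this
  -- count
  have hcount : A.ncard ≤ B.card := by
    have h1 : A.ncard = (f '' A).ncard := (Set.ncard_image_of_injOn hinjA).symm
    have h2 : f '' A ⊆ (B : Set (Finset (Fin n → Fin K))) := by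
      rintro _ ⟨I, hI, rfl⟩; exact hfB I hI
    have h3 := Set.ncard_le_ncard h2 (B : Set (Finset (Fin n → Fin K))).toFinite
    rw [Set.ncard_coe_finset] at h3
    omega
  -- bound on B.card
  have hm : Fintype.card (Fin n → Fin K) = K ^ n := by
    simp [Fintype.card_fun]
  have hBcard : B.card ≤ (K + 1) * (K ^ n) ^ K := by
    have hsub : B ⊆ (Finset.range (K + 1)).biUnion
        (fun j => Finset.univ.powersetCard j) := by
      intro s hs
      rw [hB, Finset.mem_filter] at hs
      rw [Finset.mem_biUnion]
      exact ⟨s.card, Finset.mem_range.mpr (by omega),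
        Finset.mem_powersetCard_univ.mpr rfl⟩
    calc B.card ≤ _ := Finset.card_le_card hsub
      _ ≤ ∑ j ∈ Finset.range (K + 1), (Finset.univ.powersetCard j).card :=
          Finset.card_biUnion_le
      _ ≤ ∑ _j ∈ Finset.range (K + 1), (K ^ n) ^ K := by
          refine Finset.sum_le_sum fun j hj => ?_
          rw [Finset.card_powersetCard, Finset.card_univ, hm]
          calc (K ^ n).choose j ≤ (K ^ n) ^ j := Nat.choose_le_pow _ _
            _ ≤ (K ^ n) ^ K := Nat.pow_le_pow_right
                (Nat.one_le_pow _ _ (by omega)) (by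
                  have := Finset.mem_range.mp hj; omega)
      _ = (K + 1) * (K ^ n) ^ K := by
          rw [Finset.sum_const, Finset.card_range, smul_eq_mul]
  -- final numeric bound
  have hnum : (K + 1) * (K ^ n) ^ K ≤ 2 ^ K * K ^ (n * K + n) := by
    rw [← pow_mul, pow_add]
    have h1 : K + 1 ≤ 2 ^ K * K ^ n := by
      calc K + 1 ≤ 2 * K := by omega
        _ ≤ 2 ^ K * K ^ n := Nat.mul_le_mul
            (Nat.le_self_pow (by omega) 2) (Nat.le_self_pow (by omega) K)
    calc (K + 1) * K ^ (n * K) ≤ (2 ^ K * K ^ n) * K ^ (n * K) :=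
          Nat.mul_le_mul_right _ h1
      _ = 2 ^ K * (K ^ (n * K) * K ^ n) := by ring
  have : A.ncard ≤ 2 ^ K * K ^ (n * K + n) := le_trans hcount (le_trans hBcard hnum)
  calc (A.ncard : ℝ) ≤ ((2 ^ K * K ^ (n * K + n) : ℕ) : ℝ) := by exact_mod_cast this
    _ = 2 ^ K * (K : ℝ) ^ (n * K + n) := by push_cast; ring
end

section
/- Let F be a field, n ≥ 1, and let I be an ideal of F[X_1,...,X_n] containing X_i^{T_i} − 1 for positive integers T_1,...,T_n and each i = 1,...,n. Fix a monomial order on F[X_1,...,X_n], and let Δ(I) = { j ∈ ℕⁿ : X^j is not the leading monomial of any nonzero element of I }. Then Δ(I) is finite and the dimension of the quotient F[X_1,...,X_n]/I as an F-vector space equals |Δ(I)|. -/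
/-!
The monomials `X^j` with `j ∈ Δ(I)` span a linear complement of `I`. They are independent
modulo `I` because a nonzero element of `I` has its leading exponent outside `Δ(I)`, and they
span modulo `I` because the remainder of the division algorithm by all nonzero elements of `I`
has no term divisible by a leading monomial of `I`. Finiteness: `X^(d + Tᵢ eᵢ) - X^d` lies in
`I` and has leading exponent `d + Tᵢ eᵢ`, so every `j ∈ Δ(I)` satisfies `jᵢ < Tᵢ`.
-/

open MvPolynomial

/-- The Delta set of an ideal `I` with respect to a monomial order `mo`: the set of
exponent vectors `j` such that `X^j` is not the leading monomial of any nonzero element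
of `I`.  (Here `j` is the leading exponent of `f ≠ 0` iff `j` lies in the support of `f`
and dominates every element of the support of `f` in the order `mo`.) -/
def deltaSet {n : ℕ} {F : Type} [Field F] (mo : MonomialOrder (Fin n))
    (I : Ideal (MvPolynomial (Fin n) F)) : Set (Fin n →₀ ℕ) :=
  {j | ¬ ∃ f ∈ I, f ≠ 0 ∧ j ∈ f.support ∧ ∀ k ∈ f.support, mo.toSyn k ≤ mo.toSyn j}

section DeltaSet

variable {n : ℕ} {F : Type} [Field F] {mo : MonomialOrder (Fin n)}
  {I : Ideal (MvPolynomial (Fin n) F)}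

theorem mem_deltaSet_iff {j : Fin n →₀ ℕ} :
    j ∈ deltaSet mo I ↔ ∀ f ∈ I, f ≠ 0 → mo.degree f ≠ j := by
  refine ⟨fun hj f hf hf0 hdeg => hj ⟨f, hf, hf0, ?_, fun k hk => ?_⟩,
    fun hj ⟨f, hf, hf0, hjf, hmax⟩ => hj f hf hf0 ?_⟩
  · exact hdeg ▸ mo.degree_mem_support hf0
  · exact hdeg ▸ mo.le_degree hk
  · exact mo.toSyn.injective <|
      le_antisymm (hmax _ (mo.degree_mem_support hf0)) (mo.le_degree hjf)

theorem disjoint_restrictSupport_deltaSet :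
    Disjoint (restrictSupport F (deltaSet mo I)) (I.restrictScalars F) := by
  refine Submodule.disjoint_def.mpr fun f hfΔ hfI => by_contra fun hf0 => ?_
  exact mem_deltaSet_iff.mp (hfΔ (mo.degree_mem_support hf0)) f hfI hf0 rfl

theorem restrictSupport_deltaSet_sup_eq_top :
    restrictSupport F (deltaSet mo I) ⊔ I.restrictScalars F = ⊤ := by
  refine eq_top_iff.mpr fun f _ => ?_
  obtain ⟨q, r, hf, -, hr⟩ := mo.div_set (B := {b | b ∈ I ∧ b ≠ 0})
    (fun b hb => (mo.leadingCoeff_ne_zero_iff.mpr hb.2).isUnit) f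
  have hqI : Finsupp.linearCombination _ (fun b : {b | b ∈ I ∧ b ≠ 0} => b.1) q ∈ I := by
    rw [Finsupp.linearCombination_apply]
    exact Submodule.sum_mem _ fun b _ => I.smul_mem _ b.2.1
  have hrΔ : r ∈ restrictSupport F (deltaSet mo I) :=
    fun c hc => mem_deltaSet_iff.mpr fun b hb hb0 hbc => hr c hc b ⟨hb, hb0⟩ hbc.le
  rw [hf, add_comm]
  exact Submodule.add_mem_sup hrΔ hqI

theorem isCompl_restrictSupport_deltaSet :
    IsCompl (restrictSupport F (deltaSet mo I)) (I.restrictScalars F) :=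
  ⟨disjoint_restrictSupport_deltaSet, codisjoint_iff.mpr restrictSupport_deltaSet_sup_eq_top⟩

/-- Both sides vanish when `deltaSet mo I` is infinite. -/
theorem finrank_quotient_eq_ncard_deltaSet :
    Module.finrank F (MvPolynomial (Fin n) F ⧸ I) = (deltaSet mo I).ncard := by
  let e := (Submodule.Quotient.restrictScalarsEquiv F I).symm ≪≫ₗ
    (I.restrictScalars F).quotientEquivOfIsCompl _
      (isCompl_restrictSupport_deltaSet (mo := mo)).symm
  rw [e.finrank_eq, Module.finrank_eq_nat_card_basis (basisRestrictSupport F _),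
    Nat.card_coe_set_eq]

theorem add_single_notMem_deltaSet {i : Fin n} {T : ℕ} (hT : 0 < T)
    (hI : (X i : MvPolynomial (Fin n) F) ^ T - 1 ∈ I) (d : Fin n →₀ ℕ) :
    d + Finsupp.single i T ∉ deltaSet mo I := by
  classical
  have hlt : d < d + Finsupp.single i T :=
    lt_add_of_pos_right d (pos_iff_ne_zero.mpr (by simpa using hT.ne'))
  have hmem : monomial (d + Finsupp.single i T) (1 : F) - monomial d 1 ∈ I := by
    convert I.mul_mem_left (monomial d 1) hI using 1
    rw [X_pow_eq_monomial, mul_sub, monomial_mul, mul_one, mul_one]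
  have hne : monomial (d + Finsupp.single i T) (1 : F) - monomial d 1 ≠ 0 :=
    sub_ne_zero.mpr ((monomial_left_injective one_ne_zero).ne hlt.ne')
  have hdeg : mo.degree (monomial (d + Finsupp.single i T) (1 : F) - monomial d 1) =
      d + Finsupp.single i T := by
    rw [mo.degree_sub_of_lt] <;> simp only [mo.degree_monomial, one_ne_zero, if_false]
    exact mo.toSyn_strictMono hlt
  exact fun hΔ => mem_deltaSet_iff.mp hΔ _ hmem hne hdeg

theorem deltaSet_subset_Iic {T : Fin n → ℕ} (hT : ∀ i, 0 < T i)
    (hI : ∀ i, (X i : MvPolynomial (Fin n) F) ^ T i - 1 ∈ I) :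
    deltaSet mo I ⊆ Set.Iic (Finsupp.equivFunOnFinite.symm fun i => T i - 1) := by
  intro j hj i
  by_contra! hi
  have hTi : Finsupp.single i (T i) ≤ j := by
    simp only [Finsupp.single_le_iff]
    simp only [Finsupp.coe_equivFunOnFinite_symm] at hi
    omega
  rw [← tsub_add_cancel_of_le hTi] at hj
  exact add_single_notMem_deltaSet (hT i) (hI i) _ hj

theorem deltaSet_finite {T : Fin n → ℕ} (hT : ∀ i, 0 < T i)
    (hI : ∀ i, (X i : MvPolynomial (Fin n) F) ^ T i - 1 ∈ I) :
    (deltaSet mo I).Finite :=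
  (Set.finite_Iic _).subset (deltaSet_subset_Iic hT hI)

end DeltaSet

theorem statement_9_general {n : ℕ} {F : Type} [Field F]
    (I : Ideal (MvPolynomial (Fin n) F)) (T : Fin n → ℕ) (hT : ∀ i, 0 < T i)
    (hI : ∀ i, (X i : MvPolynomial (Fin n) F) ^ T i - 1 ∈ I)
    (mo : MonomialOrder (Fin n)) :
    (deltaSet mo I).Finite ∧
      Module.finrank F (MvPolynomial (Fin n) F ⧸ I) = (deltaSet mo I).ncard :=
  ⟨deltaSet_finite hT hI, finrank_quotient_eq_ncard_deltaSet⟩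

/-- If an ideal `I` of `F[X_1,…,X_n]` contains `X_i^{T_i} - 1` for positive integers
`T_1,…,T_n`, then for any monomial order its Delta set is finite and the dimension of
`F[X_1,…,X_n]/I` over `F` equals the cardinality of the Delta set. -/
theorem statement_9 {n : ℕ} (hn : 1 ≤ n) {F : Type} [Field F]
    (I : Ideal (MvPolynomial (Fin n) F)) (T : Fin n → ℕ) (hT : ∀ i, 0 < T i)
    (hI : ∀ i, (X i : MvPolynomial (Fin n) F) ^ T i - 1 ∈ I)
    (mo : MonomialOrder (Fin n)) :
    (deltaSet mo I).Finite ∧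
      Module.finrank F (MvPolynomial (Fin n) F ⧸ I) = (deltaSet mo I).ncard :=
  statement_9_general I T hT hI mo
end

section
/- Let T_1,...,T_n be pairwise coprime positive integers and let s : ℕⁿ → F_q be periodic with period (T_1,...,T_n). Define the one-dimensional sequence t : ℕ → F_q by t(m) = s(m mod T_1, ..., m mod T_n) = s(m, m, ..., m) for all m ≥ 0. Then t is periodic with period T_1·T_2⋯T_n and L(s) ≤ L(t). -/
open MvPolynomial

/-- The value at `m` of the sequence `P·s`, i.e. `∑_j a_j s(m+j)` where `P = ∑_j a_j X^j`. -/
def recSum {n : ℕ} {F : Type} [Field F] (s : (Fin n → ℕ) → F)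
    (P : MvPolynomial (Fin n) F) (m : Fin n → ℕ) : F :=
  ∑ j ∈ P.support, P.coeff j * s (fun i => m i + j i)

lemma recSum_superset {n : ℕ} {F : Type} [Field F] (s : (Fin n → ℕ) → F)
    (P : MvPolynomial (Fin n) F) (m : Fin n → ℕ) {T : Finset (Fin n →₀ ℕ)}
    (hT : P.support ⊆ T) :
    ∑ j ∈ T, P.coeff j * s (fun i => m i + j i) = recSum s P m := by
  refine (Finset.sum_subset hT ?_).symm
  intro j _ hj
  rw [MvPolynomial.notMem_support_iff.mp hj, zero_mul]

/-- `I(s)`: the ideal of all polynomials `P = ∑_j a_j X^j` such that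
`∑_j a_j s(m + j) = 0` for all `m`, i.e. of all linear recurrences satisfied by `s`. -/
def seqIdeal {n : ℕ} {F : Type} [Field F] (s : (Fin n → ℕ) → F) :
    Ideal (MvPolynomial (Fin n) F) where
  carrier := {P | ∀ m, recSum s P m = 0}
  zero_mem' := by intro m; simp [recSum]
  add_mem' := by
    intro P Q hP hQ m
    have h : recSum s (P + Q) m
        = ∑ j ∈ P.support ∪ Q.support, (P + Q).coeff j * s (fun i => m i + j i) :=
      (recSum_superset s (P + Q) m (MvPolynomial.support_add)).symm
    rw [h]
    simp only [MvPolynomial.coeff_add, add_mul]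
    rw [Finset.sum_add_distrib,
      recSum_superset s P m Finset.subset_union_left,
      recSum_superset s Q m Finset.subset_union_right, hP m, hQ m, add_zero]
  smul_mem' := by
    intro c P hP
    simp only [smul_eq_mul, Set.mem_setOf_eq] at *
    induction c using MvPolynomial.induction_on generalizing P with
    | C a =>
      intro m
      have hsupp : (C a * P).support ⊆ P.support := by
        rw [← MvPolynomial.smul_eq_C_mul]
        exact Finsupp.support_smul
      rw [← recSum_superset s (C a * P) m hsupp]
      have : ∀ j ∈ P.support, (C a * P).coeff j * s (fun i => m i + j i)
          = a * (P.coeff j * s (fun i => m i + j i)) := by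
        intro j _
        rw [MvPolynomial.coeff_C_mul, mul_assoc]
      rw [Finset.sum_congr rfl this, ← Finset.mul_sum]
      rw [recSum_superset s P m (le_refl _)]
      rw [hP m, mul_zero]
    | add p q hp hq =>
      intro m
      rw [add_mul]
      have h1 := hp hP
      have h2 := hq hP
      have h : recSum s (p * P + q * P) m
          = ∑ j ∈ (p * P).support ∪ (q * P).support,
            (p * P + q * P).coeff j * s (fun i => m i + j i) :=
        (recSum_superset s _ m (MvPolynomial.support_add)).symm
      rw [h]
      simp only [MvPolynomial.coeff_add, add_mul]
      rw [Finset.sum_add_distrib,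
        recSum_superset s _ m Finset.subset_union_left,
        recSum_superset s _ m Finset.subset_union_right, h1 m, h2 m, add_zero]
    | mul_X p i hp =>
      intro m
      rw [mul_assoc]
      have hX : ∀ m', recSum s (X i * P) m' = 0 := by
        intro m'
        unfold recSum
        rw [MvPolynomial.support_X_mul, Finset.sum_map]
        have : ∀ j ∈ P.support,
            (X i * P).coeff (addLeftEmbedding (Finsupp.single i 1) j)
              * s (fun t => m' t + (addLeftEmbedding (Finsupp.single i 1) j) t)
            = P.coeff j * s (fun t => (m' t + Finsupp.single i 1 t) + j t) := by
          intro j _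
          rw [addLeftEmbedding_apply, MvPolynomial.coeff_X_mul]
          have harg : (fun t => m' t + ((Finsupp.single i 1 + j : Fin n →₀ ℕ)) t)
              = fun t => (m' t + Finsupp.single i 1 t) + j t := by
            funext t; rw [Finsupp.add_apply]; ring
          rw [harg]
        rw [Finset.sum_congr rfl this]
        have := hP (fun t => m' t + Finsupp.single i 1 t)
        unfold recSum at this
        exact this
      exact hp hX m

/-- The linear complexity `L(s)`: the dimension of `F[X_1,…,X_n]/I(s)` over `F`. -/
noncomputable def linComp {n : ℕ} {F : Type} [Field F] (s : (Fin n → ℕ) → F) : ℕ :=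
  Module.finrank F (MvPolynomial (Fin n) F ⧸ seqIdeal s)

/-- `s` is periodic with period `(T_1,…,T_n)` if `X_i^{T_i} - 1 ∈ I(s)` for all `i`. -/
def IsPeriodic {n : ℕ} {F : Type} [Field F] (T : Fin n → ℕ) (s : (Fin n → ℕ) → F) : Prop :=
  ∀ i, (X i : MvPolynomial (Fin n) F) ^ T i - 1 ∈ seqIdeal s

/-- The `k`-error linear complexity `L_k(s)` of a `(T_1,…,T_n)`-periodic sequence `s`:
the minimum of `L(σ)` over all `(T_1,…,T_n)`-periodic sequences `σ` differing from `s`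
in at most `k` positions of the box `{m : 0 ≤ m_i ≤ T_i - 1}`. -/
noncomputable def errComp {n : ℕ} {F : Type} [Field F] (T : Fin n → ℕ) (k : ℕ)
    (s : (Fin n → ℕ) → F) : ℕ :=
  sInf {K | ∃ σ : (Fin n → ℕ) → F, IsPeriodic T σ ∧
    ({m : Fin n → ℕ | (∀ i, m i < T i) ∧ σ m ≠ s m}).ncard ≤ k ∧ linComp σ = K}

/-!
Periodicity makes `s` depend only on `m mod T`, and makes every `X_i` a root of unity in
`A = F[X] ⧸ I(s)`; in particular `A` is finite-dimensional, and likewise for `t`.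
The substitution `Y ↦ X_1 ⋯ X_n` sends `I(t)` into `I(s)`: by the Chinese remainder theorem
every start `m` of `s` agrees modulo `T` with a diagonal start `(c, …, c)`, so a recurrence of
`t` is one of `s`. The induced map `F[Y] ⧸ I(t) → A` is onto, since again by the Chinese
remainder theorem `X_i ≡ (X_1 ⋯ X_n)^k` modulo `I(s)` for `k ≡ 1 mod T_i`, `k ≡ 0 mod T_j`
(`j ≠ i`). Hence `L(s) ≤ L(t)`.
-/

section Recurrence

variable {n : ℕ} {F : Type} [Field F] (s : (Fin n → ℕ) → F)

noncomputable def recSumLinearMap (m : Fin n → ℕ) : MvPolynomial (Fin n) F →ₗ[F] F :=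
  Finsupp.linearCombination F (fun j : Fin n →₀ ℕ => s (m + j)) ∘ₗ
    (AddMonoidAlgebra.coeffLinearEquiv F).toLinearMap

theorem recSum_add (P Q : MvPolynomial (Fin n) F) (m : Fin n → ℕ) :
    recSum s (P + Q) m = recSum s P m + recSum s Q m :=
  map_add (recSumLinearMap s m) P Q

theorem recSum_sub (P Q : MvPolynomial (Fin n) F) (m : Fin n → ℕ) :
    recSum s (P - Q) m = recSum s P m - recSum s Q m :=
  map_sub (recSumLinearMap s m) P Q

theorem recSum_C_mul (a : F) (P : MvPolynomial (Fin n) F) (m : Fin n → ℕ) :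
    recSum s (C a * P) m = a * recSum s P m := by
  rw [← smul_eq_C_mul]
  exact map_smul (recSumLinearMap s m) a P

theorem recSum_monomial (j : Fin n →₀ ℕ) (a : F) (m : Fin n → ℕ) :
    recSum s (monomial j a) m = a * s (m + j) :=
  Finsupp.linearCombination_single _ _ _

theorem recSum_prod_X_pow (e m : Fin n → ℕ) :
    recSum s (∏ i, X i ^ e i) m = s (m + e) := by
  rw [prod_X_pow, recSum_monomial, one_mul]
  congr
  ext i
  simp

theorem recSum_X_pow_sub_one (i : Fin n) (k : ℕ) (m : Fin n → ℕ) :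
    recSum s (X i ^ k - 1) m = s (m + Pi.single i k) - s m := by
  rw [recSum_sub, X_pow_eq_monomial, ← C_1, C_apply, recSum_monomial, recSum_monomial]
  simp [Finsupp.single_eq_pi_single]

end Recurrence

section Periods

variable {n : ℕ} {F : Type} [Field F] (s : (Fin n → ℕ) → F)

def periods : AddSubmonoid (Fin n → ℕ) where
  carrier := {c | ∀ m, s (m + c) = s m}
  zero_mem' m := by rw [add_zero]
  add_mem' ha hb m := by rw [← add_assoc, hb, ha]

theorem isPeriodic_iff {T : Fin n → ℕ} : IsPeriodic T s ↔ ∀ i, Pi.single i (T i) ∈ periods s :=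
  forall_congr' fun i => forall_congr' fun m => by
    rw [recSum_X_pow_sub_one, sub_eq_zero]

variable {s}

theorem IsPeriodic.apply_mod {T : Fin n → ℕ} (hs : IsPeriodic T s) (m : Fin n → ℕ) :
    s (fun i => m i % T i) = s m := by
  have hc : ∑ i, (m i / T i) • Pi.single i (T i) ∈ periods s :=
    sum_mem fun i _ => nsmul_mem ((isPeriodic_iff s).1 hs i) _
  have hm : (fun i => m i % T i) + ∑ i, (m i / T i) • Pi.single i (T i) = m := by
    ext i
    simp [Finset.sum_apply, Pi.single_apply, Nat.mod_add_div']
  rw [← hc, hm]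

end Periods

theorem adjoin_range_mk_X {σ R : Type*} [CommRing R] (I : Ideal (MvPolynomial σ R)) :
    Algebra.adjoin R (Set.range fun i => Ideal.Quotient.mk I (X i)) = ⊤ := by
  rw [Set.range_comp', ← Ideal.Quotient.mkₐ_eq_mk R, Algebra.adjoin_image, adjoin_range_X,
    Algebra.map_top, AlgHom.range_eq_top]
  exact Ideal.Quotient.mkₐ_surjective R I

section Quotient

variable {n : ℕ} {F : Type} [Field F] {s : (Fin n → ℕ) → F} {T : Fin n → ℕ}

theorem IsPeriodic.mk_X_pow (hs : IsPeriodic T s) (i : Fin n) :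
    Ideal.Quotient.mk (seqIdeal s) (X i) ^ T i = 1 := by
  rw [← map_pow, ← sub_eq_zero, ← map_one (Ideal.Quotient.mk _), ← map_sub]
  exact Ideal.Quotient.eq_zero_iff_mem.2 (hs i)

theorem IsPeriodic.finite_quotient (hT : ∀ i, 0 < T i) (hs : IsPeriodic T s) :
    Module.Finite F (MvPolynomial (Fin n) F ⧸ seqIdeal s) := by
  rw [Module.finite_def, ← Algebra.top_toSubmodule, ← adjoin_range_mk_X]
  refine fg_adjoin_of_finite (Set.finite_range _) ?_
  rintro _ ⟨i, rfl⟩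
  exact .of_pow (hT i) (by rw [hs.mk_X_pow]; exact isIntegral_one)

end Quotient

theorem Finset.prod_pow_eq_prod_pow_of_modEq {ι M : Type*} [CommMonoid M] (u : Finset ι)
    {x : ι → M} {T e : ι → ℕ} (hx : ∀ i, x i ^ T i = 1) {k : ℕ} (hk : ∀ i, k ≡ e i [MOD T i]) :
    (∏ i ∈ u, x i) ^ k = ∏ i ∈ u, x i ^ e i := by
  rw [← Finset.prod_pow]
  refine Finset.prod_congr rfl fun i _ => ?_
  rw [pow_eq_pow_mod k (hx i), pow_eq_pow_mod (e i) (hx i), hk i]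

theorem exists_modEq_of_pairwise_coprime {ι : Type*} [Fintype ι] {T : ι → ℕ}
    (hT : ∀ i, 0 < T i) (hcop : ∀ i j, i ≠ j → Nat.Coprime (T i) (T j)) (e : ι → ℕ) :
    ∃ k, ∀ i, k ≡ e i [MOD T i] := by
  classical
  obtain ⟨k, hk⟩ := Nat.chineseRemainderOfFinset e T Finset.univ (fun i _ => (hT i).ne')
    fun i _ j _ hij => hcop i j hij
  exact ⟨k, fun i => hk i (Finset.mem_univ i)⟩

section Diagonal

variable {n : ℕ} {F : Type} [Field F]

variable (n F) in
noncomputable def diagonalHom : MvPolynomial (Fin 1) F →ₐ[F] MvPolynomial (Fin n) F :=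
  aeval fun _ => ∏ i, X i

theorem recSum_diagonalHom (s : (Fin n → ℕ) → F) (u : (Fin 1 → ℕ) → F) {m : Fin n → ℕ}
    {m' : Fin 1 → ℕ} (h : ∀ k : ℕ, s (m + fun _ => k) = u (m' + fun _ => k))
    (P : MvPolynomial (Fin 1) F) :
    recSum s (diagonalHom n F P) m = recSum u P m' := by
  induction P using MvPolynomial.induction_on' with
  | monomial k a =>
    rw [diagonalHom, aeval_monomial, Finsupp.prod_fintype _ _ fun _ => pow_zero _,
      Fin.prod_univ_one, ← Finset.prod_pow, algebraMap_eq, recSum_C_mul, recSum_prod_X_pow,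
      recSum_monomial, h]
    congr
    ext i
    rw [Fin.fin_one_eq_zero i]
  | add P Q hP hQ => rw [map_add, recSum_add, recSum_add, hP, hQ]

variable {s : (Fin n → ℕ) → F} {T : Fin n → ℕ} {t : (Fin 1 → ℕ) → F}

theorem isPeriodic_diagonal (ht : ∀ m : Fin 1 → ℕ, t m = s (fun i => m 0 % T i)) :
    IsPeriodic (fun _ : Fin 1 => ∏ i, T i) t := by
  refine (isPeriodic_iff t).2 fun i m => ?_
  rw [Fin.fin_one_eq_zero i, ht, ht]
  congr
  ext j
  obtain ⟨c, hc⟩ := Finset.dvd_prod_of_mem T (Finset.mem_univ j)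
  simp [hc, Nat.add_mul_mod_self_left]

theorem diagonalHom_mem_seqIdeal (hT : ∀ i, 0 < T i)
    (hcop : ∀ i j, i ≠ j → Nat.Coprime (T i) (T j)) (hs : IsPeriodic T s)
    (ht : ∀ m : Fin 1 → ℕ, t m = s (fun i => m 0 % T i)) {P : MvPolynomial (Fin 1) F}
    (hP : P ∈ seqIdeal t) : diagonalHom n F P ∈ seqIdeal s := by
  intro m
  obtain ⟨c, hc⟩ := exists_modEq_of_pairwise_coprime hT hcop m
  rw [recSum_diagonalHom s t (m' := fun _ => c) _ P]
  · exact hP _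
  intro k
  rw [ht, ← hs.apply_mod]
  congr
  ext i
  exact ((hc i).add_right k).symm

theorem surjective_mk_comp_diagonalHom (hT : ∀ i, 0 < T i)
    (hcop : ∀ i j, i ≠ j → Nat.Coprime (T i) (T j)) (hs : IsPeriodic T s) :
    Function.Surjective ((Ideal.Quotient.mkₐ F (seqIdeal s)).comp (diagonalHom n F)) := by
  rw [← AlgHom.range_eq_top, eq_top_iff, ← adjoin_range_mk_X, Algebra.adjoin_le_iff]
  rintro _ ⟨i, rfl⟩
  obtain ⟨k, hk⟩ := exists_modEq_of_pairwise_coprime hT hcop (Pi.single i 1)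
  refine ⟨X 0 ^ k, ?_⟩
  change Ideal.Quotient.mk _ (diagonalHom n F (X 0 ^ k)) = _
  rw [map_pow, diagonalHom, aeval_X, map_pow, map_prod,
    Finset.prod_pow_eq_prod_pow_of_modEq _ hs.mk_X_pow hk]
  simp [Pi.single_apply]

end Diagonal

theorem statement_10_general {n : ℕ} {F : Type} [Field F]
    (T : Fin n → ℕ) (hT : ∀ i, 0 < T i)
    (hcop : ∀ i j, i ≠ j → Nat.Coprime (T i) (T j))
    (s : (Fin n → ℕ) → F) (hs : IsPeriodic T s)
    (t : (Fin 1 → ℕ) → F) (ht : ∀ m : Fin 1 → ℕ, t m = s (fun i => m 0 % T i)) :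
    IsPeriodic (fun _ : Fin 1 => ∏ i, T i) t ∧ linComp s ≤ linComp t := by
  have ht_per := isPeriodic_diagonal ht
  refine ⟨ht_per, ?_⟩
  have := ht_per.finite_quotient fun _ => Finset.prod_pos fun i _ => hT i
  let g := (Ideal.Quotient.mkₐ F (seqIdeal s)).comp (diagonalHom n F)
  have hg : ∀ P ∈ seqIdeal t, g P = 0 := fun P hP =>
    Ideal.Quotient.eq_zero_iff_mem.2 (diagonalHom_mem_seqIdeal hT hcop hs ht hP)
  have hsurj : Function.Surjective (Ideal.Quotient.liftₐ (seqIdeal t) g hg) :=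
    .of_comp (g := Ideal.Quotient.mk _) (surjective_mk_comp_diagonalHom hT hcop hs)
  exact LinearMap.finrank_le_finrank_of_surjective
    (f := (Ideal.Quotient.liftₐ (seqIdeal t) g hg).toLinearMap) hsurj

/-- If `T_1,…,T_n` are pairwise coprime and `s` is `(T_1,…,T_n)`-periodic, then the
one-dimensional sequence `t(m) = s(m mod T_1, …, m mod T_n)` is periodic with period
`T_1 ⋯ T_n` and `L(s) ≤ L(t)`. -/
theorem statement_10 {n : ℕ} (hn : 1 ≤ n) {F : Type} [Field F] [Fintype F]
    (T : Fin n → ℕ) (hT : ∀ i, 0 < T i)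
    (hcop : ∀ i j, i ≠ j → Nat.Coprime (T i) (T j))
    (s : (Fin n → ℕ) → F) (hs : IsPeriodic T s)
    (t : (Fin 1 → ℕ) → F) (ht : ∀ m : Fin 1 → ℕ, t m = s (fun i => m 0 % T i)) :
    IsPeriodic (fun _ : Fin 1 => ∏ i, T i) t ∧ linComp s ≤ linComp t :=
  statement_10_general T hT hcop s hs t ht
end

section
/- Let n ≥ 2 and let q be a prime power. There exists a constant c, depending only on n and q, such that for all positive integers T_1,...,T_n and every integer K ≥ 0, the number of sequences s : ℕⁿ → F_q that are periodic with period (T_1,...,T_n) and have linear complexity L(s) = K is at most c · q^{(n−1)K² + K^{3/2} + 2K}. -/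
open MvPolynomial

/-!
For periodic `s` the algebra `F[X]/I(s)` is finite dimensional, and its standard monomials `Δ`
(for the lexicographic order) form a basis, so `|Δ| = L(s) = K`. Since `Δ` is a lower set it
lies in the box `[0, K)ⁿ`, which leaves at most `C(Kⁿ, K)` choices for it. Given `Δ`, the
normal forms of the border monomials `a + eᵢ ∉ Δ` (`a ∈ Δ`) determine, through multiplication
by the `Xᵢ`, the normal form `∑_{a ∈ Δ} N(m)_a X^a` of every monomial `X^m`, and then
`s(m) = ∑_{a ∈ Δ} N(m)_a s(a)`; so `s` is determined by these `K · #border` coefficients and its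
`K` values on `Δ`. A lower set of size `K` in `ℕⁿ` has at most `(n - 1)K + 1` border pairs,
and `C(Kⁿ, K) = O(2^{K^{3/2}})`.
-/

namespace LinearComplexity

open MvPolynomial Finset

section StandardMonomials

variable {σ F : Type*} [Field F] (ord : MonomialOrder σ) (I : Ideal (MvPolynomial σ F))

noncomputable def monomialClass (m : σ →₀ ℕ) : MvPolynomial σ F ⧸ I :=
  Ideal.Quotient.mk I (monomial m 1)

lemma monomialClass_add (a b : σ →₀ ℕ) :
    monomialClass I (a + b) = monomialClass I a * monomialClass I b := by
  rw [monomialClass, monomialClass, monomialClass, ← map_mul, monomial_mul, one_mul]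

lemma mk_monomial (a : σ →₀ ℕ) (c : F) :
    Ideal.Quotient.mk I (monomial a c) = c • monomialClass I a := by
  rw [monomialClass, ← Ideal.Quotient.mkₐ_eq_mk F, ← map_smul, smul_monomial, smul_eq_mul,
    mul_one]

lemma span_range_monomialClass :
    Submodule.span F (Set.range (monomialClass I)) = ⊤ := by
  have h : Set.range (monomialClass I) = (Ideal.Quotient.mkₐ F I).toLinearMap ''
      Set.range (fun m : σ →₀ ℕ => (monomial m (1 : F))) := by
    rw [← Set.range_comp]; rfl
  rw [h, ← Submodule.map_span, ← coe_basisMonomials, (basisMonomials σ F).span_eq,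
    Submodule.map_top, LinearMap.range_eq_top]
  exact Ideal.Quotient.mkₐ_surjective F I

/-- Equivalently, the monomials outside the initial ideal of `I`. -/
def stdMonomials : Set (σ →₀ ℕ) :=
  {m | monomialClass I m ∉ Submodule.span F (monomialClass I '' {k | ord.toSyn k < ord.toSyn m})}

variable {I}

lemma monomialClass_mem_span_stdMonomials (m : σ →₀ ℕ) :
    monomialClass I m ∈ Submodule.span F (monomialClass I '' stdMonomials ord I) := by
  induction m using (InvImage.wf ord.toSyn wellFounded_lt).induction with
  | _ m ih =>
    by_cases hm : m ∈ stdMonomials ord I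
    · exact Submodule.subset_span ⟨m, hm, rfl⟩
    · refine Submodule.span_le.mpr ?_ (not_not.mp hm)
      rintro _ ⟨k, hk, rfl⟩
      exact ih k hk

lemma isLowerSet_stdMonomials : IsLowerSet (stdMonomials ord I) := by
  intro a b hba ha hb
  apply ha
  have h := Submodule.mem_map_of_mem
    (f := LinearMap.mulLeft F (monomialClass I (a - b))) hb
  rw [Submodule.map_span, ← Set.image_comp] at h
  rw [← tsub_add_cancel_of_le hba, monomialClass_add]
  refine Submodule.span_mono ?_ h
  rintro _ ⟨k, hk, rfl⟩
  refine ⟨a - b + k, ?_, monomialClass_add I _ _⟩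
  simpa only [Set.mem_ofPred_eq, map_add] using add_lt_add_right hk _

lemma linearIndepOn_stdMonomials :
    LinearIndepOn F (monomialClass I) (stdMonomials ord I) := by
  classical
  refine linearIndepOn_of_finite _ fun t ht htfin => ?_
  obtain ⟨u, rfl⟩ := htfin.exists_finset_coe
  clear htfin
  induction u using Finset.induction_on_max_value ord.toSyn with
  | empty => simp
  | insert a u hau hmax ih =>
    rw [Finset.coe_insert] at ht ⊢
    refine (ih ((Set.subset_insert a _).trans ht)).insert fun hspan => ht (Set.mem_insert a _) ?_
    refine Submodule.span_mono ?_ hspan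
    rintro _ ⟨k, hk, rfl⟩
    exact ⟨k, (hmax k hk).lt_of_ne fun h => hau (ord.toSyn.injective h ▸ hk), rfl⟩

noncomputable def stdBasis : Module.Basis (stdMonomials ord I) F (MvPolynomial σ F ⧸ I) :=
  Module.Basis.mk (linearIndepOn_stdMonomials ord) <| by
    rw [← span_range_monomialClass I, Submodule.span_le]
    rintro _ ⟨m, rfl⟩
    simpa [← Set.image_eq_range] using monomialClass_mem_span_stdMonomials ord m

lemma stdBasis_apply (a : stdMonomials ord I) : stdBasis ord a = monomialClass I a :=
  Module.Basis.mk_apply _ _ _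

end StandardMonomials

lemma sub_single_one_add_cancel {σ : Type*} {m : σ →₀ ℕ} {i : σ} (hi : m i ≠ 0) :
    m - Finsupp.single i 1 + Finsupp.single i 1 = m :=
  tsub_add_cancel_of_le (Finsupp.single_le_iff.mpr (Nat.one_le_iff_ne_zero.mpr hi))

section NormalForm

variable {σ F : Type*} [Field F] (ord : MonomialOrder σ) (I : Ideal (MvPolynomial σ F))

open Classical in
/-- The coefficient of `X^a` in the normal form of `X^m` modulo `I`; it is `0` when `a` is not
standard. -/
noncomputable def nfCoeff (m a : σ →₀ ℕ) : F :=
  if h : a ∈ stdMonomials ord I then (stdBasis ord).repr (monomialClass I m) ⟨a, h⟩ else 0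

variable {ord I}

lemma nfCoeff_of_notMem {a : σ →₀ ℕ} (ha : a ∉ stdMonomials ord I) (m : σ →₀ ℕ) :
    nfCoeff ord I m a = 0 :=
  dif_neg ha

lemma nfCoeff_of_mem {a : σ →₀ ℕ} (ha : a ∈ stdMonomials ord I) :
    nfCoeff ord I a = Finsupp.single a 1 := by
  funext b
  by_cases hb : b ∈ stdMonomials ord I
  · classical
    rw [nfCoeff, dif_pos hb, ← stdBasis_apply ord ⟨a, ha⟩, Module.Basis.repr_self]
    simp only [Finsupp.single_apply, Subtype.mk.injEq]
  · rw [nfCoeff_of_notMem hb, Finsupp.single_eq_of_ne (by rintro rfl; exact hb ha)]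

variable {Δ : Finset (σ →₀ ℕ)}

lemma monomialClass_eq_sum_nfCoeff (hΔ : stdMonomials ord I = Δ) (m : σ →₀ ℕ) :
    monomialClass I m = ∑ a ∈ Δ, nfCoeff ord I m a • monomialClass I a := by
  have hmem : ∀ a, a ∈ Δ ↔ a ∈ stdMonomials ord I := by simp [hΔ]
  let : Fintype (stdMonomials ord I) := Fintype.subtype Δ hmem
  rw [Finset.sum_subtype Δ hmem]
  conv_lhs => rw [← (stdBasis ord).sum_repr (monomialClass I m)]
  refine Finset.sum_congr rfl fun a _ => ?_
  rw [nfCoeff, dif_pos a.2, stdBasis_apply]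

lemma nfCoeff_add (hΔ : stdMonomials ord I = Δ) (m c : σ →₀ ℕ) :
    nfCoeff ord I (m + c) = ∑ a ∈ Δ, nfCoeff ord I m a • nfCoeff ord I (a + c) := by
  funext b
  rw [Finset.sum_apply]
  by_cases hb : b ∈ stdMonomials ord I
  · have h : monomialClass I (m + c) = ∑ a ∈ Δ, nfCoeff ord I m a • monomialClass I (a + c) := by
      rw [monomialClass_add, monomialClass_eq_sum_nfCoeff hΔ m, Finset.sum_mul]
      simp_rw [smul_mul_assoc, ← monomialClass_add]
    simp only [nfCoeff, dif_pos hb, h, map_sum, map_smul, Finsupp.coe_finsetSum,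
      Finset.sum_apply, Finsupp.coe_smul, Pi.smul_apply]
  · simp [nfCoeff_of_notMem hb]

lemma nfCoeff_eq_of_border {J : Ideal (MvPolynomial σ F)} (hI : stdMonomials ord I = Δ)
    (hJ : stdMonomials ord J = Δ)
    (h : ∀ a ∈ Δ, ∀ i, a + Finsupp.single i 1 ∉ Δ →
      nfCoeff ord I (a + Finsupp.single i 1) = nfCoeff ord J (a + Finsupp.single i 1))
    (m : σ →₀ ℕ) : nfCoeff ord I m = nfCoeff ord J m := by
  have hIJ : stdMonomials ord I = stdMonomials ord J := hI.trans hJ.symm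
  induction m using WellFoundedLT.induction with
  | _ m ih =>
    obtain rfl | hm := eq_or_ne m 0
    · by_cases h0 : 0 ∈ stdMonomials ord I
      · rw [nfCoeff_of_mem h0, nfCoeff_of_mem (hIJ ▸ h0)]
      · funext b
        have hb : b ∉ stdMonomials ord I := fun hb =>
          h0 (isLowerSet_stdMonomials ord (zero_le : 0 ≤ b) hb)
        rw [nfCoeff_of_notMem hb, nfCoeff_of_notMem (hIJ ▸ hb)]
    obtain ⟨i, hi⟩ := Finsupp.ne_iff.mp hm
    obtain ⟨m, rfl⟩ : ∃ m', m = m' + Finsupp.single i 1 :=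
      ⟨_, (sub_single_one_add_cancel hi).symm⟩
    have hlt : m < m + Finsupp.single i 1 :=
      lt_add_of_pos_right m (pos_iff_ne_zero.mpr (Finsupp.single_ne_zero.mpr one_ne_zero))
    rw [nfCoeff_add hI, nfCoeff_add hJ, ih m hlt]
    refine Finset.sum_congr rfl fun a ha => ?_
    by_cases hin : a + Finsupp.single i 1 ∈ Δ
    · have hin' : a + Finsupp.single i 1 ∈ stdMonomials ord I := by rwa [hI, Finset.mem_coe]
      have hinJ : a + Finsupp.single i 1 ∈ stdMonomials ord J := hIJ ▸ hin'
      rw [nfCoeff_of_mem hin', nfCoeff_of_mem hinJ]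
    · rw [h a ha i hin]

end NormalForm

section Box

variable {σ : Type*} [Fintype σ]

open Classical in
noncomputable def box (T : σ → ℕ) : Finset (σ →₀ ℕ) :=
  (Fintype.piFinset fun i => range (T i)).map Finsupp.equivFunOnFinite.symm.toEmbedding

lemma mem_box {T : σ → ℕ} {m : σ →₀ ℕ} : m ∈ box T ↔ ∀ i, m i < T i := by
  simp [box]

lemma card_box (T : σ → ℕ) : #(box T) = ∏ i, T i := by
  simp [box]

variable {F : Type*} [Field F] (ord : MonomialOrder σ) {I : Ideal (MvPolynomial σ F)}

lemma stdMonomials_subset_box {T : σ → ℕ} (hT : ∀ i, 0 < T i)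
    (hI : ∀ i, (X i : MvPolynomial σ F) ^ T i - 1 ∈ I) : stdMonomials ord I ⊆ box T := by
  intro m hm
  rw [Finset.mem_coe, mem_box]
  by_contra! h
  obtain ⟨i, hi⟩ := h
  obtain ⟨m, rfl⟩ : ∃ m', m = m' + Finsupp.single i (T i) :=
    ⟨_, (tsub_add_cancel_of_le (Finsupp.single_le_iff.mpr hi)).symm⟩
  have hone : monomialClass I (Finsupp.single i (T i)) = 1 := by
    rw [monomialClass, ← X_pow_eq_monomial, ← map_one (Ideal.Quotient.mk I)]
    exact Ideal.Quotient.eq.mpr (hI i)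
  apply hm
  rw [monomialClass_add, hone, mul_one]
  refine Submodule.subset_span ⟨m, ord.toSyn_strictMono (lt_add_of_pos_right m ?_), rfl⟩
  exact pos_iff_ne_zero.mpr (Finsupp.single_ne_zero.mpr (hT i).ne')

end Box

lemma finrank_quotient_eq_card {σ F : Type*} [Field F] {ord : MonomialOrder σ}
    {I : Ideal (MvPolynomial σ F)} {Δ : Finset (σ →₀ ℕ)} (hΔ : stdMonomials ord I = Δ) :
    Module.finrank F (MvPolynomial σ F ⧸ I) = #Δ := by
  rw [Module.finrank_eq_nat_card_basis (stdBasis ord), hΔ, Nat.card_coe_set_eq,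
    Set.ncard_coe_finset]

section LowerSets

variable {σ : Type*}

lemma lt_card_of_isLowerSet {Δ : Finset (σ →₀ ℕ)} (hΔ : IsLowerSet (Δ : Set (σ →₀ ℕ)))
    {a : σ →₀ ℕ} (ha : a ∈ Δ) (i : σ) : a i < #Δ := by
  have hsub : (range (a i + 1)).map ⟨Finsupp.single i, Finsupp.single_injective i⟩ ⊆ Δ := by
    intro b hb
    obtain ⟨k, hk, rfl⟩ := Finset.mem_map.mp hb
    exact hΔ (Finsupp.single_le_iff.mpr (Nat.lt_succ_iff.mp (mem_range.mp hk))) ha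
  simpa using card_le_card hsub

open Classical in
noncomputable def border [Fintype σ] (Δ : Finset (σ →₀ ℕ)) : Finset ((_ : σ) × (σ →₀ ℕ)) :=
  univ.sigma fun i => Δ.filter fun a => a + Finsupp.single i 1 ∉ Δ

lemma mem_border [Fintype σ] {Δ : Finset (σ →₀ ℕ)} {i : σ} {a : σ →₀ ℕ} :
    ⟨i, a⟩ ∈ border Δ ↔ a ∈ Δ ∧ a + Finsupp.single i 1 ∉ Δ := by
  simp [border]

/-- In a lower set, `a ↦ a + eᵢ` matches the elements `a` with `a + eᵢ ∈ Δ` with those whose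
`i`-th coordinate is positive. -/
lemma card_filter_add_single_notMem [DecidableEq σ] {Δ : Finset (σ →₀ ℕ)}
    (hΔ : IsLowerSet (Δ : Set (σ →₀ ℕ))) (i : σ) :
    #(Δ.filter fun a => a + Finsupp.single i 1 ∉ Δ) = #(Δ.filter fun b => b i = 0) := by
  have hin : #(Δ.filter fun a => a + Finsupp.single i 1 ∈ Δ) = #(Δ.filter fun b => ¬b i = 0) := by
    refine card_nbij' (· + Finsupp.single i 1) (· - Finsupp.single i 1) ?_ ?_ ?_ ?_
    · intro a ha
      simp_all
    · intro b hb
      simp only [coe_filter, Set.mem_ofPred_eq] at hb ⊢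
      exact ⟨hΔ tsub_le_self hb.1, (sub_single_one_add_cancel hb.2).symm ▸ hb.1⟩
    · intro a _
      simp
    · intro b hb
      simp only [coe_filter, Set.mem_ofPred_eq] at hb
      exact sub_single_one_add_cancel hb.2
  have h1 := card_filter_add_card_filter_not (s := Δ) fun a => a + Finsupp.single i 1 ∈ Δ
  have h2 := card_filter_add_card_filter_not (s := Δ) fun b : σ →₀ ℕ => b i = 0
  omega

/-- Double counting: every nonzero element of `Δ` has at most `|σ| - 1` vanishing coordinates. -/
lemma card_border_le [Fintype σ] {Δ : Finset (σ →₀ ℕ)} (hΔ : IsLowerSet (Δ : Set (σ →₀ ℕ))) :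
    #(border Δ) ≤ (Fintype.card σ - 1) * #Δ + 1 := by
  classical
  have hzeros : ∀ b : σ →₀ ℕ,
      #(univ.filter fun i => b i = 0) ≤ (Fintype.card σ - 1) + if b = 0 then 1 else 0 := by
    intro b
    split_ifs with hb
    · exact (card_filter_le _ _).trans (by rw [card_univ]; omega)
    · obtain ⟨i, hi⟩ := Finsupp.ne_iff.mp hb
      have := card_lt_card ((filter_ssubset (s := univ) (p := fun i => b i = 0)).mpr
        ⟨i, mem_univ i, by simpa using hi⟩)
      rw [card_univ] at this
      omega
  calc #(border Δ) = ∑ i, #(Δ.filter fun b => b i = 0) := by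
        rw [border, card_sigma]
        exact sum_congr rfl fun i _ => card_filter_add_single_notMem hΔ i
    _ = ∑ b ∈ Δ, #(univ.filter fun i => b i = 0) :=
        sum_card_bipartiteAbove_eq_sum_card_bipartiteBelow (s := univ) (t := Δ)
          (r := fun i b => b i = 0)
    _ ≤ ∑ b ∈ Δ, ((Fintype.card σ - 1) + if b = 0 then 1 else 0) := sum_le_sum fun b _ => hzeros b
    _ ≤ (Fintype.card σ - 1) * #Δ + 1 := by
        rw [sum_add_distrib, sum_const, smul_eq_mul, mul_comm, sum_ite_eq']
        split_ifs <;> omega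

open Classical in
noncomputable def lowerSetsInBox (σ : Type*) [Fintype σ] (K : ℕ) : Finset (Finset (σ →₀ ℕ)) :=
  ((box fun _ : σ => K).powersetCard K).filter fun Δ => IsLowerSet (Δ : Set (σ →₀ ℕ))

lemma card_lowerSetsInBox_le [Fintype σ] (K : ℕ) :
    #(lowerSetsInBox σ K) ≤ (K ^ Fintype.card σ).choose K := by
  classical
  refine (card_filter_le _ _).trans ?_
  rw [card_powersetCard, card_box, prod_const, card_univ]

lemma mem_lowerSetsInBox [Fintype σ] {Δ : Finset (σ →₀ ℕ)}
    (hΔ : IsLowerSet (Δ : Set (σ →₀ ℕ))) : Δ ∈ lowerSetsInBox σ #Δ := by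
  classical
  rw [lowerSetsInBox, mem_filter, mem_powersetCard]
  exact ⟨⟨fun a ha => mem_box.mpr (lt_card_of_isLowerSet hΔ ha), rfl⟩, hΔ⟩

end LowerSets

section Sequences

variable {n : ℕ} {F : Type} [Field F]

lemma recSum_add (s : (Fin n → ℕ) → F) (P Q : MvPolynomial (Fin n) F) (m : Fin n → ℕ) :
    recSum s (P + Q) m = recSum s P m + recSum s Q m := by
  rw [← recSum_superset s (P + Q) m support_add, ← recSum_superset s P m subset_union_left,
    ← recSum_superset s Q m subset_union_right, ← sum_add_distrib]
  simp only [coeff_add, add_mul]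

lemma recSum_monomial (s : (Fin n → ℕ) → F) (a : Fin n →₀ ℕ) (c : F) (m : Fin n → ℕ) :
    recSum s (monomial a c) m = c * s (fun i => m i + a i) := by
  rw [← recSum_superset s _ m support_monomial_subset]
  simp

noncomputable def recSumAddHom (s : (Fin n → ℕ) → F) (m : Fin n → ℕ) :
    MvPolynomial (Fin n) F →+ F where
  toFun P := recSum s P m
  map_zero' := by simp [recSum]
  map_add' P Q := recSum_add s P Q m

variable {ord : MonomialOrder (Fin n)} {Δ : Finset (Fin n →₀ ℕ)}

lemma apply_eq_sum_nfCoeff {s : (Fin n → ℕ) → F} (hΔ : stdMonomials ord (seqIdeal s) = Δ)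
    (m : Fin n →₀ ℕ) : s m = ∑ a ∈ Δ, nfCoeff ord (seqIdeal s) m a * s a := by
  have hmem : monomial m 1 - ∑ a ∈ Δ, monomial a (nfCoeff ord (seqIdeal s) m a) ∈ seqIdeal s := by
    rw [← Ideal.Quotient.eq_zero_iff_mem, map_sub, map_sum]
    simp_rw [mk_monomial, one_smul]
    rw [← monomialClass_eq_sum_nfCoeff hΔ m, monomialClass, sub_self]
  have h : recSumAddHom s 0 _ = 0 := hmem 0
  rw [map_sub, map_sum, sub_eq_zero] at h
  simpa [recSumAddHom, recSum_monomial] using h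

lemma eq_of_nfCoeff_border_eq {s s' : (Fin n → ℕ) → F} (hs : stdMonomials ord (seqIdeal s) = Δ)
    (hs' : stdMonomials ord (seqIdeal s') = Δ)
    (hborder : ∀ a ∈ Δ, ∀ i, a + Finsupp.single i 1 ∉ Δ →
      nfCoeff ord (seqIdeal s) (a + Finsupp.single i 1) =
        nfCoeff ord (seqIdeal s') (a + Finsupp.single i 1))
    (hinit : ∀ a ∈ Δ, s a = s' a) : s = s' := by
  funext g
  obtain ⟨m, rfl⟩ : ∃ m : Fin n →₀ ℕ, ⇑m = g := Finsupp.equivFunOnFinite.surjective g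
  rw [apply_eq_sum_nfCoeff hs, apply_eq_sum_nfCoeff hs', nfCoeff_eq_of_border hs hs' hborder]
  exact sum_congr rfl fun a ha => by rw [hinit a ha]

noncomputable def borderData (ord : MonomialOrder (Fin n)) (Δ : Finset (Fin n →₀ ℕ))
    (s : (Fin n → ℕ) → F) : (border Δ → Δ → F) × (Δ → F) :=
  (fun p a => nfCoeff ord (seqIdeal s) (p.1.2 + Finsupp.single p.1.1 1) a, fun a => s a)

lemma injOn_borderData :
    Set.InjOn (borderData (F := F) ord Δ) {s | stdMonomials ord (seqIdeal s) = Δ} := by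
  intro s hs s' hs' h
  refine eq_of_nfCoeff_border_eq hs hs' (fun a ha i hai => funext fun b => ?_)
    fun a ha => congrFun (congrArg Prod.snd h) ⟨a, ha⟩
  by_cases hb : b ∈ Δ
  · exact congrFun (congrFun (congrArg Prod.fst h) ⟨⟨i, a⟩, mem_border.mpr ⟨ha, hai⟩⟩) ⟨b, hb⟩
  · rw [nfCoeff_of_notMem (by rwa [hs, mem_coe]), nfCoeff_of_notMem (by rwa [hs', mem_coe])]

variable [Fintype F]

lemma finite_setOf_stdMonomials_eq (ord : MonomialOrder (Fin n)) (Δ : Finset (Fin n →₀ ℕ)) :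
    {s : (Fin n → ℕ) → F | stdMonomials ord (seqIdeal s) = Δ}.Finite :=
  Set.Finite.of_injOn (Set.mapsTo_univ _ _) injOn_borderData Set.finite_univ

lemma ncard_setOf_stdMonomials_eq_le (ord : MonomialOrder (Fin n)) (Δ : Finset (Fin n →₀ ℕ)) :
    {s : (Fin n → ℕ) → F | stdMonomials ord (seqIdeal s) = Δ}.ncard ≤
      Fintype.card F ^ (#Δ * #(border Δ) + #Δ) := by
  refine (Set.ncard_le_ncard_of_injOn _ (fun _ _ => Set.mem_univ _) injOn_borderData
    Set.finite_univ).trans_eq ?_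
  rw [Set.ncard_univ, Nat.card_eq_fintype_card, Fintype.card_prod, Fintype.card_fun,
    Fintype.card_fun, Fintype.card_coe, Fintype.card_coe, ← pow_mul, ← pow_add]

theorem ncard_isPeriodic_linComp_eq_le {T : Fin n → ℕ} (hT : ∀ i, 0 < T i) (K : ℕ) :
    {s : (Fin n → ℕ) → F | IsPeriodic T s ∧ linComp s = K}.ncard ≤
      (K ^ n).choose K * Fintype.card F ^ (K * ((n - 1) * K + 1) + K) := by
  let ord : MonomialOrder (Fin n) := MonomialOrder.lex
  have hsub : {s : (Fin n → ℕ) → F | IsPeriodic T s ∧ linComp s = K} ⊆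
      ⋃ Δ ∈ lowerSetsInBox (Fin n) K, {s | stdMonomials ord (seqIdeal s) = Δ} := by
    rintro s ⟨hper, rfl⟩
    have hfin := (box T).finite_toSet.subset (stdMonomials_subset_box ord hT hper)
    have hΔ : stdMonomials ord (seqIdeal s) = hfin.toFinset := hfin.coe_toFinset.symm
    rw [linComp, finrank_quotient_eq_card hΔ]
    exact Set.mem_biUnion (mem_lowerSetsInBox (hΔ ▸ isLowerSet_stdMonomials ord)) hΔ
  calc _ ≤ (⋃ Δ ∈ lowerSetsInBox (Fin n) K, {s | stdMonomials ord (seqIdeal s) = Δ}).ncard :=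
        Set.ncard_le_ncard hsub <| (lowerSetsInBox (Fin n) K).finite_toSet.biUnion
          fun Δ _ => finite_setOf_stdMonomials_eq ord Δ
    _ ≤ ∑ Δ ∈ lowerSetsInBox (Fin n) K, {s | stdMonomials ord (seqIdeal s) = Δ}.ncard :=
        set_ncard_biUnion_le _ _
    _ ≤ ∑ _Δ ∈ lowerSetsInBox (Fin n) K, Fintype.card F ^ (K * ((n - 1) * K + 1) + K) := by
        refine sum_le_sum fun Δ hΔ => (ncard_setOf_stdMonomials_eq_le ord Δ).trans ?_
        classical
        obtain ⟨⟨-, hcard⟩, hlower⟩ := mem_filter.mp hΔ |>.imp_left mem_powersetCard.mp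
        have hborder := card_border_le hlower
        rw [Fintype.card_fin, hcard] at hborder
        rw [hcard]
        gcongr
        exact Fintype.card_pos
    _ ≤ _ := by
        rw [sum_const, smul_eq_mul]
        gcongr
        simpa using card_lowerSetsInBox_le (σ := Fin n) K

end Sequences

section Asymptotics

open Filter Real Asymptotics

/-- `C(K^n, K) ≤ K^{nK} = 2^{nK log₂ K}`, and `n log K = o(√K)`. -/
lemma isBigO_choose_pow (n : ℕ) :
    (fun K : ℕ => ((K ^ n).choose K : ℝ)) =O[atTop]
      fun K => (2 : ℝ) ^ ((K : ℝ) ^ ((3 : ℝ) / 2)) := by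
  have hlog : ∀ᶠ x : ℝ in atTop, n * log x ≤ log 2 * x ^ ((1 : ℝ) / 2) := by
    filter_upwards [((isLittleO_log_rpow_atTop (by norm_num : (0 : ℝ) < 1 / 2)).const_mul_left
      (n : ℝ)).bound (log_pos one_lt_two), eventually_ge_atTop 0] with x hx hx0
    simpa [abs_of_nonneg, hx0, Real.rpow_nonneg] using (le_abs_self _).trans hx
  refine IsBigO.of_bound 1 ?_
  filter_upwards [tendsto_natCast_atTop_atTop.eventually hlog, eventually_ge_atTop 1]
    with K hK hK1
  have hKpos : (0 : ℝ) < K := by exact_mod_cast hK1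
  rw [norm_of_nonneg (by positivity), norm_of_nonneg (by positivity), one_mul]
  calc ((K ^ n).choose K : ℝ) ≤ ((K ^ n) ^ K : ℕ) := by exact_mod_cast Nat.choose_le_pow _ _
    _ = exp (log K * (n * K)) := by
        rw [← rpow_def_of_pos hKpos, ← pow_mul]; norm_cast
    _ ≤ exp (log 2 * (K : ℝ) ^ ((3 : ℝ) / 2)) := by
        rw [exp_le_exp, show (3 : ℝ) / 2 = 1 / 2 + 1 by norm_num, rpow_add hKpos, rpow_one]
        nlinarith
    _ = (2 : ℝ) ^ ((K : ℝ) ^ ((3 : ℝ) / 2)) := (rpow_def_of_pos two_pos _).symm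

lemma exists_choose_pow_le (n : ℕ) :
    ∃ c > 0, ∀ K : ℕ, ((K ^ n).choose K : ℝ) ≤ c * (2 : ℝ) ^ ((K : ℝ) ^ ((3 : ℝ) / 2)) := by
  obtain ⟨c, hc, h⟩ := bound_of_isBigO_nat_atTop (isBigO_choose_pow n)
  refine ⟨c, hc, fun K => ?_⟩
  have h2 : (0 : ℝ) < 2 ^ ((K : ℝ) ^ ((3 : ℝ) / 2)) := by positivity
  simpa [norm_of_nonneg h2.le] using h h2.ne'

end Asymptotics

end LinearComplexity

/-- There is a constant `c` depending only on `n` and `q` such that for all periods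
`(T_1,…,T_n)` and all `K ≥ 0`, the number of `(T_1,…,T_n)`-periodic sequences with linear
complexity exactly `K` is at most `c · q^{(n-1)K² + K^{3/2} + 2K}`. -/
theorem statement_13 {n : ℕ} (hn : 2 ≤ n) {F : Type} [Field F] [Fintype F]
    (q : ℕ) (hq : Fintype.card F = q) :
    ∃ c : ℝ, ∀ T : Fin n → ℕ, (∀ i, 0 < T i) → ∀ K : ℕ,
      ({s : (Fin n → ℕ) → F | IsPeriodic T s ∧ linComp s = K}.ncard : ℝ)
        ≤ c * (q : ℝ) ^ (((n : ℝ) - 1) * K ^ 2 + (K : ℝ) ^ ((3 : ℝ) / 2) + 2 * K) := by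
  obtain ⟨c, hc, hchoose⟩ := LinearComplexity.exists_choose_pow_le n
  refine ⟨c, fun T hT K => ?_⟩
  have hq2 : (2 : ℝ) ≤ q := by exact_mod_cast hq ▸ Fintype.one_lt_card
  have hexp : ((K * ((n - 1) * K + 1) + K : ℕ) : ℝ) = ((n : ℝ) - 1) * K ^ 2 + 2 * K := by
    push_cast [Nat.cast_sub (by omega : 1 ≤ n)]
    ring
  calc _ ≤ ((K ^ n).choose K : ℝ) * (q : ℝ) ^ (K * ((n - 1) * K + 1) + K) := by
        exact_mod_cast hq ▸ LinearComplexity.ncard_isPeriodic_linComp_eq_le hT K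
    _ ≤ c * (2 : ℝ) ^ ((K : ℝ) ^ ((3 : ℝ) / 2)) * (q : ℝ) ^ (K * ((n - 1) * K + 1) + K) := by
        gcongr
        exact hchoose K
    _ ≤ c * (q : ℝ) ^ ((K : ℝ) ^ ((3 : ℝ) / 2)) * (q : ℝ) ^ (K * ((n - 1) * K + 1) + K) := by
        gcongr
    _ = _ := by
        rw [mul_assoc, ← Real.rpow_natCast, hexp, ← Real.rpow_add (by positivity)]
        ring_nf
end
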